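/- arXiv:2506.09959 — 4 statements merged into one kernel-verified Lean document; each statement's English description precedes it below -/
import Mathlib

section
/- Suppose k ≤ C√n for some constant C > 0, γ = C_γ·√(log n), λ ≥ C_λ·k^{r/2}·√(log n), with C_γ ≥ 1 + C_r and C_λ ≥ C', where C_r = 2·3^r(√(2r)+1) and C' = C_γ + C_r + 1. Then with probability at least 1 − n^{−1/2} (over W) the following holds simultaneously for all σ ∈ A and all i: for any coordinate i ∈ {1,…,n} with θ_i ≠ 0 and σ_i ≠ θ_i, letting σ' ∈ {−1,0,1}^n be the vector with σ'_i = θ_i and σ'_j = σ_j for j ≠ i, one has H(σ') ≥ max_{s ∈ {1,2}} H(σ' − s·θ_i·e_i) + (‖σ‖₀ − 1)^{r−1} · √(log n). -/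
open Finset MeasureTheory ProbabilityTheory

/-- Number of nonzero coordinates of a vector (the "ℓ₀ norm"). -/
noncomputable def suppCard {n : ℕ} (σ : Fin n → ℝ) : ℕ :=
  (Finset.univ.filter (fun m => σ m ≠ 0)).card

/-- The regularized Hamiltonian H(σ) = ⟨σ^{⊗r}, Y⟩ − γ‖σ‖₀^r, where
Y(f) = (λ/k^{r/2})·∏_l θ(f l) + W(f). -/
noncomputable def Ham (n r k : ℕ) (lam γ : ℝ) (θ : Fin n → ℝ)
    (W : (Fin r → Fin n) → ℝ) (σ : Fin n → ℝ) : ℝ :=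
  (∑ f : Fin r → Fin n,
      (∏ l : Fin r, σ (f l)) *
        ((lam / (k : ℝ) ^ ((r : ℝ) / 2)) * (∏ l : Fin r, θ (f l)) + W f))
    - γ * (suppCard σ : ℝ) ^ r

/-- The set A: all σ ∈ {−1,0,1}^n with
(λ/k^{r/2})(⟨σ,θ⟩−1)^{r−1} ≥ C'√(log n)(‖σ‖₀−1)^{r−1}, ‖σ‖₀ ≥ 2, ⟨σ,θ⟩ ≥ 2. -/
def memA (n r k : ℕ) (lam C' : ℝ) (θ σ : Fin n → ℝ) : Prop :=
  (∀ m, σ m = -1 ∨ σ m = 0 ∨ σ m = 1) ∧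
  C' * Real.sqrt (Real.log n) * ((suppCard σ : ℝ) - 1) ^ (r - 1) ≤
    (lam / (k : ℝ) ^ ((r : ℝ) / 2)) * ((∑ m, σ m * θ m) - 1) ^ (r - 1) ∧
  2 ≤ suppCard σ ∧ (2 : ℝ) ≤ ∑ m, σ m * θ m

namespace Stmt4Aux

lemma succ_pow_sub (x : ℝ) (r : ℕ) :
    (x + 1) ^ r - x ^ r = ∑ i ∈ Finset.range r, (x + 1) ^ i * x ^ (r - 1 - i) := by
  have h := geom_sum₂_mul (x + 1) x r
  rw [show x + 1 - x = 1 by ring, mul_one] at h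
  exact h.symm

lemma succ_pow_sub_mono {r : ℕ} {x y : ℝ} (hx : 0 ≤ x) (hxy : x ≤ y) :
    (x + 1) ^ r - x ^ r ≤ (y + 1) ^ r - y ^ r := by
  rw [succ_pow_sub, succ_pow_sub]
  apply Finset.sum_le_sum
  intro i _
  exact mul_le_mul (pow_le_pow_left₀ (by linarith) (by linarith) i)
    (pow_le_pow_left₀ hx hxy _) (pow_nonneg hx _) (pow_nonneg (by linarith) i)

lemma key_ineq {r : ℕ} {M d : ℝ} (hM : 2 ≤ M) (hMd : M ≤ d) :
    ((d + 1) ^ r - d ^ r) * (M - 1) ^ (r - 1) ≤ ((M + 1) ^ r - M ^ r) * (d - 1) ^ (r - 1) := by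
  rw [succ_pow_sub, succ_pow_sub, Finset.sum_mul, Finset.sum_mul]
  apply Finset.sum_le_sum
  intro i hi
  rw [Finset.mem_range] at hi
  set j := r - 1 - i with hjd
  have hsplit : r - 1 = i + j := by omega
  rw [hsplit, pow_add, pow_add]
  have e1 : (d + 1) ^ i * d ^ j * ((M - 1) ^ i * (M - 1) ^ j)
      = ((d + 1) * (M - 1)) ^ i * (d * (M - 1)) ^ j := by
    rw [mul_pow, mul_pow]; ring
  have e2 : (M + 1) ^ i * M ^ j * ((d - 1) ^ i * (d - 1) ^ j)
      = ((M + 1) * (d - 1)) ^ i * (M * (d - 1)) ^ j := by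
    rw [mul_pow, mul_pow]; ring
  rw [e1, e2]
  have h1 : (0:ℝ) ≤ (d + 1) * (M - 1) := by nlinarith
  have h2 : (d + 1) * (M - 1) ≤ (M + 1) * (d - 1) := by nlinarith
  have h3 : (0:ℝ) ≤ d * (M - 1) := by nlinarith
  have h4 : d * (M - 1) ≤ M * (d - 1) := by nlinarith
  exact mul_le_mul (pow_le_pow_left₀ h1 h2 i) (pow_le_pow_left₀ h3 h4 _)
    (pow_nonneg h3 _) (pow_nonneg (le_trans h1 h2) i)

lemma sub_ge_aux {r : ℕ} (hr : 1 ≤ r) {x : ℝ} (hx : 1 ≤ x) :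
    (x - 1) ^ (r - 1) ≤ (x + 1) ^ r - x ^ r := by
  rw [succ_pow_sub]
  have hmem : r - 1 ∈ Finset.range r := Finset.mem_range.mpr (by omega)
  have h1 := Finset.single_le_sum (f := fun i => (x + 1) ^ i * x ^ (r - 1 - i))
    (fun i _ => mul_nonneg (pow_nonneg (by linarith) _) (pow_nonneg (by linarith) _)) hmem
  refine le_trans ?_ h1
  show (x - 1) ^ (r - 1) ≤ (x + 1) ^ (r - 1) * x ^ (r - 1 - (r - 1))
  rw [Nat.sub_self, pow_zero, mul_one]
  exact pow_le_pow_left₀ (by linarith) (by linarith : x - 1 ≤ x + 1) _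

lemma nat_aux : ∀ r : ℕ, 2 ≤ r → r * 2 ^ (r - 1) ≤ 3 ^ r := by
  intro r
  induction r with
  | zero => intro h; omega
  | succ m ih =>
    intro h
    rcases Nat.lt_or_ge m 2 with hm | hm
    · interval_cases m
      · omega
      · norm_num
    · have h2 : 2 ^ m = 2 * 2 ^ (m - 1) := by
        conv_lhs => rw [show m = 1 + (m - 1) by omega]
        rw [pow_add, pow_one]
      have h3 : 2 * (m + 1) ≤ 3 * m := by omega
      calc (m + 1) * 2 ^ m = 2 * (m + 1) * 2 ^ (m - 1) := by rw [h2]; ring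
        _ ≤ 3 * m * 2 ^ (m - 1) := Nat.mul_le_mul_right _ h3
        _ = 3 * (m * 2 ^ (m - 1)) := by ring
        _ ≤ 3 * 3 ^ m := Nat.mul_le_mul_left _ (ih hm)
        _ = 3 ^ (m + 1) := by rw [pow_succ]; ring

lemma B_le {r d : ℕ} (hr : 2 ≤ r) (hd : 2 ≤ d) :
    ((d : ℝ) + 1) ^ r - (d : ℝ) ^ r ≤ 3 ^ r * ((d : ℝ) - 1) ^ (r - 1) := by
  rcases eq_or_lt_of_le hd with h2 | h3
  · have hd2 : (d : ℝ) = 2 := by rw [← h2]; norm_num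
    rw [hd2]
    have h0 : ((2:ℝ) - 1) ^ (r - 1) = 1 := by norm_num
    rw [h0, mul_one]
    have h5 : (0:ℝ) ≤ (2:ℝ) ^ r := by positivity
    have h21 : (2:ℝ) + 1 = 3 := by norm_num
    rw [h21]; linarith
  · have hd3 : (3:ℝ) ≤ (d : ℝ) := by exact_mod_cast h3
    have hstep : ((d : ℝ) + 1) ^ r - (d : ℝ) ^ r ≤ (r : ℝ) * ((d : ℝ) + 1) ^ (r - 1) := by
      rw [succ_pow_sub]
      calc ∑ i ∈ Finset.range r, ((d : ℝ) + 1) ^ i * (d : ℝ) ^ (r - 1 - i)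
          ≤ ∑ _i ∈ Finset.range r, ((d : ℝ) + 1) ^ (r - 1) := by
            apply Finset.sum_le_sum
            intro i hi
            rw [Finset.mem_range] at hi
            have hterm : ((d : ℝ) + 1) ^ i * (d : ℝ) ^ (r - 1 - i)
                ≤ ((d : ℝ) + 1) ^ i * ((d : ℝ) + 1) ^ (r - 1 - i) :=
              mul_le_mul_of_nonneg_left
                (pow_le_pow_left₀ (by positivity) (by linarith) _) (by positivity)
            refine le_trans hterm ?_
            rw [← pow_add]
            apply le_of_eq; congr 1; omega
        _ = (r : ℝ) * ((d : ℝ) + 1) ^ (r - 1) := by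
            rw [Finset.sum_const, Finset.card_range, nsmul_eq_mul]
    refine le_trans hstep ?_
    have h5 : ((d : ℝ) + 1) ^ (r - 1) ≤ (2 * ((d : ℝ) - 1)) ^ (r - 1) :=
      pow_le_pow_left₀ (by positivity) (by linarith) _
    have h6 : (r : ℝ) * ((d : ℝ) + 1) ^ (r - 1) ≤ (r : ℝ) * (2 * ((d : ℝ) - 1)) ^ (r - 1) :=
      mul_le_mul_of_nonneg_left h5 (by positivity)
    refine le_trans h6 ?_
    rw [mul_pow, ← mul_assoc]
    apply mul_le_mul_of_nonneg_right _ (pow_nonneg (by linarith) _)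
    have hna := nat_aux r hr
    have hcast : ((r * 2 ^ (r - 1) : ℕ) : ℝ) ≤ ((3 ^ r : ℕ) : ℝ) := by exact_mod_cast hna
    push_cast at hcast
    linarith

lemma supp_update_ne {n : ℕ} (σ : Fin n → ℝ) (i : Fin n) {x : ℝ} (hx : x ≠ 0) :
    Finset.univ.filter (fun m => Function.update σ i x m ≠ 0)
      = insert i ((Finset.univ.filter (fun m => σ m ≠ 0)).erase i) := by
  ext m
  by_cases hm : m = i
  · subst hm; simp [hx]
  · simp [Function.update_of_ne hm, hm]

lemma supp_update_zero {n : ℕ} (σ : Fin n → ℝ) (i : Fin n) :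
    Finset.univ.filter (fun m => Function.update σ i (0:ℝ) m ≠ 0)
      = (Finset.univ.filter (fun m => σ m ≠ 0)).erase i := by
  ext m
  by_cases hm : m = i
  · subst hm; simp
  · simp [Function.update_of_ne hm, hm]

lemma Ham_eq (n r k : ℕ) (lam γ : ℝ) (θ : Fin n → ℝ) (W : (Fin r → Fin n) → ℝ)
    (σ : Fin n → ℝ) :
    Ham n r k lam γ θ W σ = (lam / (k : ℝ) ^ ((r : ℝ) / 2)) * (∑ m, σ m * θ m) ^ r
      + (∑ f : Fin r → Fin n, (∏ l, σ (f l)) * W f) - γ * (suppCard σ : ℝ) ^ r := by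
  unfold Ham
  have h1 : ∀ f : Fin r → Fin n,
      (∏ l, σ (f l)) * ((lam / (k : ℝ) ^ ((r : ℝ) / 2)) * (∏ l, θ (f l)) + W f)
      = (lam / (k : ℝ) ^ ((r : ℝ) / 2)) * (∏ l, σ (f l) * θ (f l)) + (∏ l, σ (f l)) * W f := by
    intro f
    rw [Finset.prod_mul_distrib]
    ring
  rw [Finset.sum_congr rfl (fun f _ => h1 f), Finset.sum_add_distrib, ← Finset.mul_sum]
  have h2 : (∑ m, σ m * θ m) ^ r = ∑ f : Fin r → Fin n, ∏ l, σ (f l) * θ (f l) := by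
    calc (∑ m, σ m * θ m) ^ r = ∏ _l : Fin r, (∑ m, σ m * θ m) := by
          rw [Finset.prod_const, Finset.card_univ, Fintype.card_fin]
      _ = ∑ f ∈ Fintype.piFinset (fun _ : Fin r => Finset.univ), ∏ l, σ (f l) * θ (f l) :=
          Finset.prod_univ_sum _ _
      _ = ∑ f : Fin r → Fin n, ∏ l, σ (f l) * θ (f l) := by rw [Fintype.piFinset_univ]
  rw [h2]

set_option maxHeartbeats 2000000 in
lemma deterministic (n r k : ℕ) (hr : 2 ≤ r)
    (θ : Fin n → ℝ) (hθ : ∀ m, θ m = -1 ∨ θ m = 0 ∨ θ m = 1)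
    (Cγ Cr C' γ lam L : ℝ) (hLpos : 0 < L)
    (hCr : Cr = 2 * 3 ^ r * (Real.sqrt (2 * r) + 1))
    (hC' : C' = Cγ + Cr + 1)
    (hγ : γ = Cγ * Real.sqrt L)
    (hCγ : 1 + Cr ≤ Cγ)
    (W : (Fin r → Fin n) → ℝ)
    (hW : ∀ f, |W f| ≤ (Real.sqrt (2 * r) + 1) * Real.sqrt L)
    (σ : Fin n → ℝ)
    (hσv : ∀ m, σ m = -1 ∨ σ m = 0 ∨ σ m = 1)
    (hAineq : C' * Real.sqrt L * ((suppCard σ : ℝ) - 1) ^ (r - 1) ≤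
        (lam / (k : ℝ) ^ ((r : ℝ) / 2)) * ((∑ m, σ m * θ m) - 1) ^ (r - 1))
    (hd2 : 2 ≤ suppCard σ) (hM2 : (2 : ℝ) ≤ ∑ m, σ m * θ m)
    (i : Fin n) (hθi : θ i ≠ 0) (hne : σ i ≠ θ i)
    (s : ℝ) (hs : s = 1 ∨ s = 2) :
    Ham n r k lam γ θ W (Function.update σ i (θ i - s * θ i)) +
        ((suppCard σ : ℝ) - 1) ^ (r - 1) * Real.sqrt L ≤
      Ham n r k lam γ θ W (Function.update σ i (θ i)) := by
  classical
  obtain ⟨hs1, hs2⟩ : 1 ≤ s ∧ s ≤ 2 := by rcases hs with rfl | rfl <;> norm_num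
  set a : ℝ := lam / (k : ℝ) ^ ((r : ℝ) / 2) with ha_def
  set M : ℝ := ∑ m, σ m * θ m with hM_def
  set d : ℕ := suppCard σ with hd_def
  set sL : ℝ := Real.sqrt L with hsL_def
  have hsLpos : 0 < sL := Real.sqrt_pos.mpr hLpos
  have hCr0 : 0 ≤ Cr := by
    rw [hCr]; positivity
  have hdR : (2:ℝ) ≤ (d:ℝ) := by exact_mod_cast hd2
  set P : ℝ := ((d:ℝ) - 1) ^ (r - 1) with hP_def
  have hP1 : (1:ℝ) ≤ P := by
    rw [hP_def]
    calc (1:ℝ) = 1 ^ (r - 1) := (one_pow _).symm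
      _ ≤ ((d:ℝ) - 1) ^ (r - 1) := pow_le_pow_left₀ (by norm_num) (by linarith) _
  have hPpos : (0:ℝ) < P := by linarith
  have hC'pos : 0 < C' := by rw [hC']; linarith
  have ha : 0 < a := by
    have h1 : 0 < C' * sL * P := by positivity
    have h2 : (0:ℝ) < (M - 1) ^ (r - 1) := pow_pos (by linarith) _
    nlinarith [hAineq]
  have hθsq : θ i * θ i = 1 := by
    rcases hθ i with h | h | h
    · rw [h]; norm_num
    · exact absurd h hθi
    · rw [h]; norm_num
  have hσiθ : σ i * θ i ≤ 0 := by
    rcases hσv i with h | h | h <;> rcases hθ i with h' | h' | h'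
    · exact absurd (h.trans h'.symm) hne
    · exact absurd h' hθi
    · rw [h, h']; norm_num
    · rw [h]; norm_num
    · exact absurd h' hθi
    · rw [h]; norm_num
    · rw [h, h']; norm_num
    · exact absurd h' hθi
    · exact absurd (h.trans h'.symm) hne
  set e : Finset (Fin n) := (Finset.univ.filter (fun m => σ m ≠ 0)).erase i with he_def
  set c : ℕ := e.card with hc_def
  have hinotine : i ∉ e := fun h => (Finset.mem_erase.mp h).1 rfl
  have hcd : c ≤ d := by
    rw [hc_def, hd_def]; unfold suppCard; exact Finset.card_erase_le
  set σ' := Function.update σ i (θ i) with hσ'_def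
  set σ'' := Function.update σ i (θ i - s * θ i) with hσ''_def
  have hD' : suppCard σ' = c + 1 := by
    rw [hσ'_def]; unfold suppCard
    rw [supp_update_ne σ i hθi, Finset.card_insert_of_notMem hinotine]
  have hD'' : suppCard σ'' = c ∨ suppCard σ'' = c + 1 := by
    rcases hs with hs' | hs'
    · left
      have h0 : θ i - s * θ i = 0 := by rw [hs']; ring
      rw [hσ''_def, h0]; unfold suppCard; rw [supp_update_zero σ i]
    · right
      have h0 : θ i - s * θ i = -θ i := by rw [hs']; ring
      rw [hσ''_def, h0]; unfold suppCard
      rw [supp_update_ne σ i (neg_ne_zero.mpr hθi), Finset.card_insert_of_notMem hinotine]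
  have hσ'v : ∀ m, σ' m = -1 ∨ σ' m = 0 ∨ σ' m = 1 := by
    intro m; by_cases hm : m = i
    · subst hm; rw [hσ'_def, Function.update_self]; exact hθ m
    · rw [hσ'_def, Function.update_of_ne hm]; exact hσv m
  have hσ''v : ∀ m, σ'' m = -1 ∨ σ'' m = 0 ∨ σ'' m = 1 := by
    intro m; by_cases hm : m = i
    · subst hm; rw [hσ''_def, Function.update_self]
      rcases hs with hs' | hs'
      · right; left; rw [hs']; ring
      · rcases hθ m with h | h | h
        · right; right; rw [hs', h]; ring
        · exact absurd h hθi
        · left; rw [hs', h]; ring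
    · rw [hσ''_def, Function.update_of_ne hm]; exact hσv m
  have hsum_upd : ∀ b : ℝ, ∑ m, Function.update σ i b m * θ m = b * θ i + M - σ i * θ i := by
    intro b
    have h : ∀ m, Function.update σ i b m * θ m
        = Function.update (fun m => σ m * θ m) i (b * θ i) m := by
      intro m; by_cases hm : m = i
      · subst hm; simp
      · simp [Function.update_of_ne hm]
    rw [Finset.sum_congr rfl (fun m _ => h m), Finset.sum_update_of_mem (Finset.mem_univ i)]
    have h2 : ∑ m ∈ Finset.univ \ {i}, σ m * θ m = M - σ i * θ i := by
      rw [hM_def]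
      have h3 := Finset.sum_eq_sum_sdiff_singleton_add (Finset.mem_univ i) (fun m => σ m * θ m)
      linarith
    rw [h2]; ring
  have hM'eq : ∑ m, σ' m * θ m = M - σ i * θ i + 1 := by
    rw [hσ'_def, hsum_upd, hθsq]; ring
  have hM''eq : ∑ m, σ'' m * θ m = M - σ i * θ i + 1 - s := by
    rw [hσ''_def, hsum_upd]
    have h0 : (θ i - s * θ i) * θ i = (1 - s) * (θ i * θ i) := by ring
    rw [h0, hθsq]; ring
  set M' : ℝ := M - σ i * θ i + 1 with hM'_def
  have hM'ge : M + 1 ≤ M' := by rw [hM'_def]; linarith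
  -- noise bound
  set T : Finset (Fin r → Fin n) :=
    Fintype.piFinset (fun _ : Fin r => insert i e) \ Fintype.piFinset (fun _ : Fin r => e)
    with hT_def
  have hTsub : Fintype.piFinset (fun _ : Fin r => e)
      ⊆ Fintype.piFinset (fun _ : Fin r => insert i e) :=
    Fintype.piFinset_subset _ _ (fun _ => Finset.subset_insert i e)
  have hdiff0 : ∀ f : Fin r → Fin n, f ∉ T → (∏ l, σ' (f l)) = ∏ l, σ'' (f l) := by
    intro f hf
    rw [hT_def, Finset.mem_sdiff] at hf
    push_neg at hf
    by_cases hf1 : f ∈ Fintype.piFinset (fun _ : Fin r => insert i e)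
    · have hf2 := hf hf1
      rw [Fintype.mem_piFinset] at hf2
      apply Finset.prod_congr rfl
      intro l _
      have hli : f l ≠ i := by
        intro h
        exact hinotine (h ▸ hf2 l)
      rw [hσ'_def, hσ''_def, Function.update_of_ne hli, Function.update_of_ne hli]
    · rw [Fintype.mem_piFinset] at hf1
      push_neg at hf1
      obtain ⟨l, hl⟩ := hf1
      have hli : f l ≠ i := fun h => hl (h ▸ Finset.mem_insert_self i e)
      have hσ0 : σ (f l) = 0 := by
        by_contra h0
        refine hl (Finset.mem_insert_of_mem ?_)
        rw [he_def]
        exact Finset.mem_erase.mpr ⟨hli, Finset.mem_filter.mpr ⟨Finset.mem_univ _, h0⟩⟩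
      have z1 : σ' (f l) = 0 := by rw [hσ'_def, Function.update_of_ne hli]; exact hσ0
      have z2 : σ'' (f l) = 0 := by rw [hσ''_def, Function.update_of_ne hli]; exact hσ0
      rw [Finset.prod_eq_zero (Finset.mem_univ l) z1, Finset.prod_eq_zero (Finset.mem_univ l) z2]
  have habs1 : ∀ (τ : Fin n → ℝ), (∀ m, τ m = -1 ∨ τ m = 0 ∨ τ m = 1) →
      ∀ f : Fin r → Fin n, |∏ l, τ (f l)| ≤ 1 := by
    intro τ hτ f
    rw [Finset.abs_prod]
    apply Finset.prod_le_one (fun l _ => abs_nonneg _)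
    intro l _
    rcases hτ (f l) with h | h | h <;> rw [h] <;> norm_num
  set t : ℝ := (Real.sqrt (2 * r) + 1) * sL with ht_def
  have ht0 : 0 ≤ t := by
    rw [ht_def]; positivity
  have hTcard : (T.card : ℝ) ≤ ((c:ℝ) + 1) ^ r - (c:ℝ) ^ r := by
    rw [hT_def, Finset.card_sdiff_of_subset hTsub]
    have h1 : (Fintype.piFinset (fun _ : Fin r => insert i e)).card = (c + 1) ^ r := by
      rw [Fintype.card_piFinset]
      simp [Finset.card_insert_of_notMem hinotine, hc_def]
    have h2 : (Fintype.piFinset (fun _ : Fin r => e)).card = c ^ r := by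
      rw [Fintype.card_piFinset]; simp [hc_def]
    rw [h1, h2, Nat.cast_sub (Nat.pow_le_pow_left (Nat.le_succ c) r)]
    push_cast
    exact le_refl _
  have hnoise : |(∑ f : Fin r → Fin n, (∏ l, σ' (f l)) * W f)
      - ∑ f : Fin r → Fin n, (∏ l, σ'' (f l)) * W f|
      ≤ 2 * t * (((c:ℝ) + 1) ^ r - (c:ℝ) ^ r) := by
    rw [← Finset.sum_sub_distrib]
    rw [← Finset.sum_subset (Finset.subset_univ T)
      (fun f _ hf => by rw [hdiff0 f hf]; ring)]
    calc |∑ f ∈ T, ((∏ l, σ' (f l)) * W f - (∏ l, σ'' (f l)) * W f)|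
        ≤ ∑ f ∈ T, |(∏ l, σ' (f l)) * W f - (∏ l, σ'' (f l)) * W f| :=
          Finset.abs_sum_le_sum_abs _ _
      _ ≤ ∑ _f ∈ T, 2 * t := by
          apply Finset.sum_le_sum
          intro f _
          have h1 := habs1 σ' hσ'v f
          have h2 := habs1 σ'' hσ''v f
          have h3 := hW f
          have h4 : |(∏ l, σ' (f l)) * W f - (∏ l, σ'' (f l)) * W f|
              ≤ |∏ l, σ' (f l)| * |W f| + |∏ l, σ'' (f l)| * |W f| := by
            rw [sub_eq_add_neg]
            refine le_trans (abs_add_le _ _) ?_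
            rw [abs_neg, abs_mul, abs_mul]
          nlinarith [abs_nonneg (W f), abs_nonneg (∏ l, σ' (f l)), abs_nonneg (∏ l, σ'' (f l))]
      _ = (T.card : ℝ) * (2 * t) := by rw [Finset.sum_const, nsmul_eq_mul]
      _ ≤ (((c:ℝ) + 1) ^ r - (c:ℝ) ^ r) * (2 * t) :=
          mul_le_mul_of_nonneg_right hTcard (by linarith)
      _ = 2 * t * (((c:ℝ) + 1) ^ r - (c:ℝ) ^ r) := by ring
  -- core comparison
  set B : ℝ := ((d:ℝ) + 1) ^ r - (d:ℝ) ^ r with hB_def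
  have hk3 : P ≤ B := by
    rw [hP_def, hB_def]
    exact sub_ge_aux (by omega) (by linarith)
  have hBpos : 0 < B := lt_of_lt_of_le hPpos hk3
  have hB3 : B ≤ 3 ^ r * P := by rw [hB_def, hP_def]; exact B_le hr hd2
  have hcB : ((c:ℝ) + 1) ^ r - (c:ℝ) ^ r ≤ B := by
    rw [hB_def]
    have hcdr : (c:ℝ) ≤ (d:ℝ) := by exact_mod_cast hcd
    exact succ_pow_sub_mono (by positivity) hcdr
  have hMd : M ≤ (d:ℝ) := by
    have h1 : M = ∑ m ∈ Finset.univ.filter (fun m => σ m ≠ 0), σ m * θ m := by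
      rw [hM_def]
      refine (Finset.sum_subset (Finset.filter_subset _ _) ?_).symm
      intro m _ hm
      have h0 : ¬ σ m ≠ 0 := fun h => hm (Finset.mem_filter.mpr ⟨Finset.mem_univ m, h⟩)
      push_neg at h0
      rw [h0, zero_mul]
    rw [h1]
    calc ∑ m ∈ Finset.univ.filter (fun m => σ m ≠ 0), σ m * θ m
        ≤ ∑ _m ∈ Finset.univ.filter (fun m => σ m ≠ 0), (1:ℝ) := by
          apply Finset.sum_le_sum
          intro m _
          rcases hσv m with h | h | h <;> rcases hθ m with h' | h' | h' <;>
            rw [h, h'] <;> norm_num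
      _ = ((Finset.univ.filter (fun m => σ m ≠ 0)).card : ℝ) := by
          rw [Finset.sum_const, nsmul_eq_mul, mul_one]
      _ = (d:ℝ) := by rw [hd_def]; rfl
  have hG0 : B * (M - 1) ^ (r - 1) ≤ ((M + 1) ^ r - M ^ r) * P := by
    rw [hB_def, hP_def]; exact key_ineq hM2 hMd
  have hstep3 : γ * B + (Cr + 1) * sL * P ≤ a * ((M + 1) ^ r - M ^ r) := by
    have c2 : C' * sL * P * B ≤ a * (M - 1) ^ (r - 1) * B :=
      mul_le_mul_of_nonneg_right hAineq hBpos.le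
    have c3 : C' * sL * P * B ≤ a * ((M + 1) ^ r - M ^ r) * P := by
      calc C' * sL * P * B ≤ a * (M - 1) ^ (r - 1) * B := c2
        _ = a * (B * (M - 1) ^ (r - 1)) := by ring
        _ ≤ a * (((M + 1) ^ r - M ^ r) * P) := mul_le_mul_of_nonneg_left hG0 ha.le
        _ = a * ((M + 1) ^ r - M ^ r) * P := by ring
    have h6 : (Cr + 1) * sL * P * P ≤ (Cr + 1) * sL * P * B :=
      mul_le_mul_of_nonneg_left hk3
        (mul_nonneg (mul_nonneg (by linarith) hsLpos.le) hPpos.le)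
    have expand : (γ * B + (Cr + 1) * sL * P) * P = Cγ * sL * P * B + (Cr + 1) * sL * P * P := by
      rw [hγ]; ring
    have expand2 : C' * sL * P * B = Cγ * sL * P * B + (Cr + 1) * sL * P * B := by
      rw [hC']; ring
    have c4 : (γ * B + (Cr + 1) * sL * P) * P ≤ C' * sL * P * B := by
      rw [expand, expand2]; linarith
    exact le_of_mul_le_mul_right (c4.trans c3) hPpos
  have hstep1 : a * ((M + 1) ^ r - M ^ r) ≤ a * (M' ^ r - (M' - s) ^ r) := by
    apply mul_le_mul_of_nonneg_left _ ha.le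
    have h1 : (M' - s) ^ r ≤ (M' - 1) ^ r :=
      pow_le_pow_left₀ (by linarith) (by linarith) r
    have h2 : (M + 1) ^ r - M ^ r ≤ (M' - 1 + 1) ^ r - (M' - 1) ^ r :=
      succ_pow_sub_mono (by linarith) (by linarith)
    rw [show M' - 1 + 1 = M' from by ring] at h2
    linarith
  have hγ0 : 0 ≤ γ := by rw [hγ]; exact mul_nonneg (by linarith) hsLpos.le
  have hstep2 : γ * ((suppCard σ' : ℝ) ^ r - (suppCard σ'' : ℝ) ^ r) ≤ γ * B := by
    apply mul_le_mul_of_nonneg_left _ hγ0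
    have h1 : (suppCard σ' : ℝ) = (c:ℝ) + 1 := by rw [hD']; push_cast; ring
    have h2 : (c:ℝ) ^ r ≤ (suppCard σ'' : ℝ) ^ r := by
      rcases hD'' with h | h <;> rw [h]
      push_cast
      exact pow_le_pow_left₀ (by positivity) (by linarith) r
    rw [h1]
    linarith [hcB]
  have hstep4 : -(Cr * sL * P) ≤ (∑ f : Fin r → Fin n, (∏ l, σ' (f l)) * W f)
      - ∑ f : Fin r → Fin n, (∏ l, σ'' (f l)) * W f := by
    have h1 : 2 * t * (((c:ℝ) + 1) ^ r - (c:ℝ) ^ r) ≤ Cr * sL * P := by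
      have h2 : 2 * t * (((c:ℝ) + 1) ^ r - (c:ℝ) ^ r) ≤ 2 * t * B :=
        mul_le_mul_of_nonneg_left hcB (by linarith)
      have h3 : 2 * t * B ≤ 2 * t * (3 ^ r * P) := mul_le_mul_of_nonneg_left hB3 (by linarith)
      have h4 : 2 * t * (3 ^ r * P) = Cr * sL * P := by rw [hCr, ht_def]; ring
      linarith
    have h5 := (abs_le.mp hnoise).1
    linarith
  simp only [Ham_eq]
  rw [hM'eq, hM''eq]
  have e1 : a * (M' ^ r - (M' - s) ^ r) = a * M' ^ r - a * (M' - s) ^ r := by ring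
  have e2 : γ * ((suppCard σ' : ℝ) ^ r - (suppCard σ'' : ℝ) ^ r)
      = γ * (suppCard σ' : ℝ) ^ r - γ * (suppCard σ'' : ℝ) ^ r := by ring
  have margin : (Cr + 1) * sL * P - Cr * sL * P = P * sL := by ring
  linarith [hstep1, hstep2, hstep3, hstep4, e1, e2, margin]

open Real Set in
lemma gaussian_tail {t : ℝ} (ht : 2 ≤ t) :
    gaussianReal 0 1 {x : ℝ | t < |x|} ≤ ENNReal.ofReal (Real.exp (-t ^ 2 / 2)) := by
  have ht0 : 0 < t := by linarith
  have hIoi : gaussianReal 0 1 (Set.Ioi t) ≤ ENNReal.ofReal (Real.exp (-t ^ 2 / 2) / 2) := by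
    rw [gaussianReal_apply_eq_integral 0 one_ne_zero]
    apply ENNReal.ofReal_le_ofReal
    have hintg : IntegrableOn (fun x : ℝ => Real.exp (t ^ 2 / 2) / 2 * Real.exp (-t * x))
        (Set.Ioi t) := (exp_neg_integrableOn_Ioi t ht0).const_mul _
    have hmono : ∫ x in Set.Ioi t, gaussianPDFReal 0 1 x
        ≤ ∫ x in Set.Ioi t, Real.exp (t ^ 2 / 2) / 2 * Real.exp (-t * x) := by
      apply setIntegral_mono_on (integrable_gaussianPDFReal 0 1).restrict hintg measurableSet_Ioi
      intro x _
      unfold gaussianPDFReal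
      simp only [NNReal.coe_one, mul_one, sub_zero]
      have h1 : (Real.sqrt (2 * π))⁻¹ ≤ 1 / 2 := by
        have h4 : (2:ℝ) ≤ Real.sqrt (2 * π) := by
          have : (4:ℝ) ≤ 2 * π := by nlinarith [Real.pi_gt_three]
          calc (2:ℝ) = Real.sqrt 4 := by
                rw [show (4:ℝ) = 2 ^ 2 by norm_num, Real.sqrt_sq (by norm_num : (0:ℝ) ≤ 2)]
            _ ≤ Real.sqrt (2 * π) := Real.sqrt_le_sqrt this
        rw [inv_le_comm₀ (by linarith) (by norm_num)]
        simpa using h4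
      have h2 : Real.exp (-x ^ 2 / 2) ≤ Real.exp (t ^ 2 / 2) * Real.exp (-t * x) := by
        rw [← Real.exp_add]
        apply Real.exp_le_exp.mpr
        nlinarith [sq_nonneg (x - t)]
      calc (Real.sqrt (2 * π))⁻¹ * Real.exp (-x ^ 2 / 2)
          ≤ (1 / 2) * (Real.exp (t ^ 2 / 2) * Real.exp (-t * x)) := by
            apply mul_le_mul h1 h2 (Real.exp_nonneg _) (by norm_num)
        _ = Real.exp (t ^ 2 / 2) / 2 * Real.exp (-t * x) := by ring
    refine le_trans hmono ?_
    have hcomp : ∫ x in Set.Ioi t, Real.exp (-t * x)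
        = t⁻¹ * Real.exp (-(t * t)) := by
      have h5 := integral_comp_mul_left_Ioi (fun u => Real.exp (-u)) t ht0
      simp only [smul_eq_mul] at h5
      rw [show (fun x => Real.exp (-t * x)) = fun x => Real.exp (-(t * x)) by
        funext x; ring_nf]
      rw [h5, integral_exp_neg_Ioi]
    rw [integral_const_mul, hcomp]
    have hexp : Real.exp (t ^ 2 / 2) * Real.exp (-(t * t)) = Real.exp (-t ^ 2 / 2) := by
      rw [← Real.exp_add]; congr 1; ring
    have htinv : t⁻¹ ≤ 1 := by
      rw [inv_le_one_iff₀]; right; linarith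
    calc Real.exp (t ^ 2 / 2) / 2 * (t⁻¹ * Real.exp (-(t * t)))
        = Real.exp (-t ^ 2 / 2) / 2 * t⁻¹ := by rw [← hexp]; ring
      _ ≤ Real.exp (-t ^ 2 / 2) / 2 * 1 := by
          apply mul_le_mul_of_nonneg_left htinv (by positivity)
      _ = Real.exp (-t ^ 2 / 2) / 2 := by ring
  have hmapneg : Measure.map (fun x : ℝ => -1 * x) (gaussianReal 0 1) = gaussianReal 0 1 := by
    rw [gaussianReal_map_const_mul (-1)]
    norm_num
  have hIio : gaussianReal 0 1 (Set.Iio (-t)) = gaussianReal 0 1 (Set.Ioi t) := by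
    conv_lhs => rw [← hmapneg]
    rw [Measure.map_apply (by fun_prop) measurableSet_Iio]
    congr 1
    ext x
    simp only [Set.mem_preimage, Set.mem_Iio, Set.mem_Ioi]
    constructor <;> intro h <;> nlinarith
  have hsplit : {x : ℝ | t < |x|} = Set.Iio (-t) ∪ Set.Ioi t := by
    ext x
    simp only [Set.mem_setOf_eq, Set.mem_union, Set.mem_Iio, Set.mem_Ioi, lt_abs]
    constructor
    · rintro (h | h)
      · right; exact h
      · left; linarith
    · rintro (h | h)
      · right; linarith
      · left; exact h
  rw [hsplit]
  calc gaussianReal 0 1 (Set.Iio (-t) ∪ Set.Ioi t)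
      ≤ gaussianReal 0 1 (Set.Iio (-t)) + gaussianReal 0 1 (Set.Ioi t) := measure_union_le _ _
    _ ≤ ENNReal.ofReal (Real.exp (-t ^ 2 / 2) / 2) + ENNReal.ofReal (Real.exp (-t ^ 2 / 2) / 2) := by
        rw [hIio]; exact add_le_add hIoi hIoi
    _ = ENNReal.ofReal (Real.exp (-t ^ 2 / 2)) := by
        rw [← ENNReal.ofReal_add (by positivity) (by positivity)]
        congr 1; ring


end Stmt4Aux

open Stmt4Aux in
set_option maxHeartbeats 1000000 in
/-- in the set A, it is always improving to fix any coordinate in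
the support of θ. -/
theorem stmt_4 (n r k : ℕ) (hn : 2 ≤ n) (hr : 2 ≤ r) (hk : 1 ≤ k)
    (θ : Fin n → ℝ) (hθ : ∀ m, θ m = -1 ∨ θ m = 0 ∨ θ m = 1) (hθk : suppCard θ = k)
    (C : ℝ) (hC : 0 < C) (hkC : (k : ℝ) ≤ C * Real.sqrt n)
    (Cγ Clam Cr C' γ lam : ℝ)
    (hCr : Cr = 2 * 3 ^ r * (Real.sqrt (2 * r) + 1))
    (hC' : C' = Cγ + Cr + 1)
    (hγ : γ = Cγ * Real.sqrt (Real.log n))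
    (hlam : Clam * (k : ℝ) ^ ((r : ℝ) / 2) * Real.sqrt (Real.log n) ≤ lam)
    (hCγ : 1 + Cr ≤ Cγ) (hClam : C' ≤ Clam) :
    ENNReal.ofReal (1 - (n : ℝ) ^ (-(1/2) : ℝ)) ≤
      Measure.pi (fun _ : Fin r → Fin n => gaussianReal 0 1)
        {W : (Fin r → Fin n) → ℝ |
          ∀ σ : Fin n → ℝ, memA n r k lam C' θ σ →
          ∀ i : Fin n, θ i ≠ 0 → σ i ≠ θ i →
          ∀ s : ℝ, (s = 1 ∨ s = 2) →
            Ham n r k lam γ θ W (Function.update σ i (θ i - s * θ i)) +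
                ((suppCard σ : ℝ) - 1) ^ (r - 1) * Real.sqrt (Real.log n) ≤
              Ham n r k lam γ θ W (Function.update σ i (θ i))} := by
  classical
  have hn1 : (1:ℝ) < (n:ℝ) := by
    have : (1:ℕ) < n := by omega
    exact_mod_cast this
  have hLpos : 0 < Real.log n := Real.log_pos hn1
  set L : ℝ := Real.log (n:ℝ) with hLdef
  set t : ℝ := (Real.sqrt (2 * r) + 1) * Real.sqrt L with htdef
  have hsr : (2:ℝ) ≤ Real.sqrt (2 * (r:ℝ)) := by
    have h1 : (4:ℝ) ≤ 2 * (r:ℝ) := by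
      have : (2:ℝ) ≤ (r:ℝ) := by exact_mod_cast hr
      linarith
    calc (2:ℝ) = Real.sqrt 4 := by
          rw [show (4:ℝ) = 2 ^ 2 by norm_num, Real.sqrt_sq (by norm_num : (0:ℝ) ≤ 2)]
      _ ≤ _ := Real.sqrt_le_sqrt h1
  have hL064 : (0.64:ℝ) ≤ L := by
    have h1 : Real.log 2 ≤ L := by
      rw [hLdef]
      apply Real.log_le_log (by norm_num)
      exact_mod_cast hn
    nlinarith [Real.log_two_gt_d9]
  have hsL08 : (0.8:ℝ) ≤ Real.sqrt L := by
    rw [show (0.8:ℝ) = Real.sqrt 0.64 by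
      rw [show (0.64:ℝ) = 0.8 ^ 2 by norm_num, Real.sqrt_sq (by norm_num)]]
    exact Real.sqrt_le_sqrt hL064
  have ht2 : 2 ≤ t := by
    rw [htdef]; nlinarith [Real.sqrt_nonneg L]
  set μpi := Measure.pi (fun _ : Fin r → Fin n => gaussianReal 0 1) with hμdef
  set Egood : Set ((Fin r → Fin n) → ℝ) := {W | ∀ f, |W f| ≤ t} with hEdef
  have hEmeas : MeasurableSet Egood := by
    have hE2 : Egood = ⋂ f, {W : (Fin r → Fin n) → ℝ | |W f| ≤ t} := by
      ext W; simp [hEdef, Set.mem_iInter]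
    rw [hE2]
    exact MeasurableSet.iInter fun f =>
      measurableSet_le ((measurable_pi_apply f).abs) measurable_const
  have hsubset : Egood ⊆ {W : (Fin r → Fin n) → ℝ |
      ∀ σ : Fin n → ℝ, memA n r k lam C' θ σ →
      ∀ i : Fin n, θ i ≠ 0 → σ i ≠ θ i →
      ∀ s : ℝ, (s = 1 ∨ s = 2) →
        Ham n r k lam γ θ W (Function.update σ i (θ i - s * θ i)) +
            ((suppCard σ : ℝ) - 1) ^ (r - 1) * Real.sqrt L ≤
          Ham n r k lam γ θ W (Function.update σ i (θ i))} := by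
    intro W hWE
    intro σ hσA i hθi hne s hs
    obtain ⟨hσv, hAineq, hd2, hM2⟩ := hσA
    rw [← hLdef] at hAineq
    have hW' : ∀ f, |W f| ≤ (Real.sqrt (2 * (r:ℝ)) + 1) * Real.sqrt L := by
      intro f
      rw [← htdef]
      exact hWE f
    exact deterministic n r k hr θ hθ Cγ Cr C' γ lam L hLpos hCr hC' hγ hCγ W hW' σ hσv
      hAineq hd2 hM2 i hθi hne s hs
  have htail : ∀ f₀ : Fin r → Fin n, μpi {W : (Fin r → Fin n) → ℝ | t < |W f₀|}
      = gaussianReal 0 1 {x : ℝ | t < |x|} := by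
    intro f₀
    have hset : {W : (Fin r → Fin n) → ℝ | t < |W f₀|}
        = Set.pi Set.univ (fun f => if f = f₀ then {x : ℝ | t < |x|} else Set.univ) := by
      ext W
      simp only [Set.mem_setOf_eq, Set.mem_pi, Set.mem_univ, forall_true_left]
      constructor
      · intro h f
        by_cases hf : f = f₀
        · subst hf; simp [h]
        · simp [hf]
      · intro h
        have := h f₀
        simpa using this
    rw [hμdef, hset, Measure.pi_pi]
    have hfac : ∀ f : Fin r → Fin n,
        gaussianReal 0 1 (if f = f₀ then {x : ℝ | t < |x|} else Set.univ)
        = if f = f₀ then gaussianReal 0 1 {x : ℝ | t < |x|} else 1 := by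
      intro f; split_ifs
      · rfl
      · exact measure_univ
    rw [Finset.prod_congr rfl (fun f _ => hfac f),
      Finset.prod_ite_eq' Finset.univ f₀ (fun _ => gaussianReal 0 1 {x : ℝ | t < |x|})]
    simp
  have hkey : ((n:ℝ) ^ r) * Real.exp (-t ^ 2 / 2) ≤ (n:ℝ) ^ (-(1/2) : ℝ) := by
    have hnpos : (0:ℝ) < n := by linarith
    have h1 : t ^ 2 = (2 * (r:ℝ) + 2 * Real.sqrt (2 * (r:ℝ)) + 1) * L := by
      have hs2 : Real.sqrt (2 * (r:ℝ)) ^ 2 = 2 * (r:ℝ) := Real.sq_sqrt (by positivity)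
      have hL2 : Real.sqrt L ^ 2 = L := Real.sq_sqrt hLpos.le
      rw [htdef]
      linear_combination (Real.sqrt L) ^ 2 * hs2
        + (2 * (r:ℝ) + 2 * Real.sqrt (2 * (r:ℝ)) + 1) * hL2
    have h2 : (n:ℝ) ^ r = Real.exp ((r:ℝ) * L) := by
      rw [← Real.exp_log (show (0:ℝ) < (n:ℝ) ^ r by positivity), Real.log_pow, hLdef]
    have h3 : (n:ℝ) ^ (-(1/2) : ℝ) = Real.exp (-(1/2) * L) := by
      rw [Real.rpow_def_of_pos hnpos, hLdef, mul_comm]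
    rw [h2, h3, ← Real.exp_add]
    apply Real.exp_le_exp.mpr
    rw [h1]
    nlinarith [hsr, hLpos]
  have hEc : μpi Egoodᶜ ≤ ENNReal.ofReal ((n:ℝ) ^ (-(1/2) : ℝ)) := by
    have h1 : Egoodᶜ ⊆ ⋃ f₀, {W : (Fin r → Fin n) → ℝ | t < |W f₀|} := by
      intro W hW
      simp only [hEdef, Set.mem_compl_iff, Set.mem_setOf_eq, not_forall, not_le] at hW
      obtain ⟨f₀, hf₀⟩ := hW
      exact Set.mem_iUnion.mpr ⟨f₀, hf₀⟩
    calc μpi Egoodᶜ ≤ μpi (⋃ f₀, {W : (Fin r → Fin n) → ℝ | t < |W f₀|}) := measure_mono h1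
      _ ≤ ∑' f₀ : Fin r → Fin n, μpi {W : (Fin r → Fin n) → ℝ | t < |W f₀|} :=
          measure_iUnion_le _
      _ = ∑' _f₀ : Fin r → Fin n, gaussianReal 0 1 {x : ℝ | t < |x|} := by
          congr 1; funext f₀; exact htail f₀
      _ = (Fintype.card (Fin r → Fin n) : ENNReal) * gaussianReal 0 1 {x : ℝ | t < |x|} := by
          rw [tsum_fintype, Finset.sum_const, Finset.card_univ, nsmul_eq_mul]
      _ ≤ (Fintype.card (Fin r → Fin n) : ENNReal) * ENNReal.ofReal (Real.exp (-t ^ 2 / 2)) :=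
          mul_le_mul_right (gaussian_tail ht2) _
      _ ≤ ENNReal.ofReal ((n:ℝ) ^ (-(1/2) : ℝ)) := by
          rw [Fintype.card_fun, Fintype.card_fin, Fintype.card_fin]
          rw [show ((n ^ r : ℕ) : ENNReal) = ENNReal.ofReal ((n ^ r : ℕ) : ℝ) from
            (ENNReal.ofReal_natCast _).symm]
          rw [← ENNReal.ofReal_mul (by positivity)]
          apply ENNReal.ofReal_le_ofReal
          push_cast
          exact hkey
  have hprob : IsProbabilityMeasure μpi := by rw [hμdef]; infer_instance
  have h1 : μpi Egood + μpi Egoodᶜ = 1 := by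
    rw [measure_add_measure_compl hEmeas, measure_univ]
  calc ENNReal.ofReal (1 - (n:ℝ) ^ (-(1/2) : ℝ))
      = 1 - ENNReal.ofReal ((n:ℝ) ^ (-(1/2) : ℝ)) := by
        rw [ENNReal.ofReal_sub 1 (by positivity), ENNReal.ofReal_one]
    _ ≤ 1 - μpi Egoodᶜ := tsub_le_tsub_left hEc 1
    _ ≤ μpi Egood := tsub_le_iff_right.mpr (le_of_eq h1.symm)
    _ ≤ _ := measure_mono hsubset
end

section
/- Suppose k ≤ C√n for some constant C > 0, γ = C_γ·√(log n), λ ≥ C_λ·k^{r/2}·√(log n), with C_γ ≥ 1 + C_r and C_λ ≥ C', where C_r = 2·3^r(√(2r)+1) and C' = C_γ + C_r + 1. Then with probability at least 1 − n^{−1/2} (over W), the only local maximum of H in the set A is θ: that is, for every σ ∈ A with σ ≠ θ there exists σ' ∈ {−1,0,1}^n with Hamming distance d_H(σ,σ') = 1 and H(σ') > H(σ). -/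
open Finset MeasureTheory ProbabilityTheory

/-!
Write `β = λ / k^{r/2}`, `s = ‖σ‖₀`, `M = ⟨σ, θ⟩` and `τ = (√(2r) + 1) √(log n)`. By the Gaussian
tail bound and a union bound over the `n^r` entries, `|W f| ≤ τ` for all `f` with probability at
least `1 - 2 n^r e^{-τ²/2} ≥ 1 - n^{-1/2}`. On this event, changing one coordinate of `σ` moves
`⟨σ^{⊗r}, W⟩` by at most `2·3^r (s - 1)^{r-1} τ`, and every `σ ∈ A` other than `θ` has a move whose
deterministic gain beats this: drop a coordinate outside the support of `θ` (the penalty falls by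
at least `2γ (s - 1)^{r-1}`), flip a coordinate of the wrong sign (the signal rises by at least
`4β (M - 1)^{r-1}`, which is large by the definition of `A`), or, if `σ` agrees with `θ` on its
support, add a missing coordinate of `θ` (net gain at least `2(β - γ)(s - 1)^{r-1}`).
-/

open Real

lemma natCast_mul_pow_pred_mul_sub_le_pow_sub_pow (r : ℕ) {x y : ℝ} (hy : 0 ≤ y) (hyx : y ≤ x) :
    r * y ^ (r - 1) * (x - y) ≤ x ^ r - y ^ r := by
  rw [← geom_sum₂_mul]
  refine mul_le_mul_of_nonneg_right ?_ (sub_nonneg.2 hyx)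
  calc (r : ℝ) * y ^ (r - 1) = ∑ i ∈ range r, y ^ i * y ^ (r - 1 - i) := by
        rw [sum_congr rfl fun i hi ↦ pow_mul_pow_sub y (Nat.le_sub_one_of_lt (mem_range.1 hi)),
          sum_const, card_range, nsmul_eq_mul]
    _ ≤ ∑ i ∈ range r, x ^ i * y ^ (r - 1 - i) := by gcongr

lemma pow_sub_sub_one_pow_le (r : ℕ) {t c : ℝ} (ht : 1 ≤ t) (ht3 : t ≤ 3 * c)
    (ht2 : t - 1 ≤ 2 * c) :
    t ^ r - (t - 1) ^ r ≤ 3 ^ r * c ^ (r - 1) := by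
  have hc : 0 ≤ c := by linarith
  calc t ^ r - (t - 1) ^ r = ∑ i ∈ range r, t ^ i * (t - 1) ^ (r - 1 - i) := by
        rw [← geom_sum₂_mul, sub_sub_cancel, mul_one]
    _ ≤ ∑ i ∈ range r, (3 * c) ^ i * (2 * c) ^ (r - 1 - i) := by
        gcongr with i
    _ = (∑ i ∈ range r, (3 : ℝ) ^ i * 2 ^ (r - 1 - i)) * c ^ (r - 1) := by
        rw [sum_mul]
        refine sum_congr rfl fun i hi ↦ ?_
        rw [mul_pow, mul_pow, ← pow_mul_pow_sub c (Nat.le_sub_one_of_lt (mem_range.1 hi))]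
        ring
    _ = (3 ^ r - 2 ^ r) * c ^ (r - 1) := by
        rw [← geom_sum₂_mul]; norm_num
    _ ≤ 3 ^ r * c ^ (r - 1) := by
        gcongr; linarith [pow_nonneg (by norm_num : (0 : ℝ) ≤ 2) r]

section TensorPairing

variable {ι : Type*} [Fintype ι] [DecidableEq ι] {r : ℕ}

def tensorPowPairing (r : ℕ) (σ : ι → ℝ) (W : (Fin r → ι) → ℝ) : ℝ :=
  ∑ f, (∏ l, σ (f l)) * W f

/-- Only the `#T ^ r - (#T - 1) ^ r` maps `f` into `T` that hit `m` contribute. -/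
lemma sum_abs_prod_update_sub_prod_le {σ : ι → ℝ} (hσ : ∀ i, |σ i| ≤ 1) {T : Finset ι}
    (hσT : ∀ i ∉ T, σ i = 0) {m : ι} (hmT : m ∈ T) {v : ℝ} (hv : |v| ≤ 1) :
    ∑ f : Fin r → ι, |∏ l, Function.update σ m v (f l) - ∏ l, σ (f l)| ≤
      2 * ((#T : ℝ) ^ r - ((#T : ℝ) - 1) ^ r) := by
  set σ' := Function.update σ m v
  have hσ' : ∀ i, |σ' i| ≤ 1 := fun i ↦ by
    by_cases hi : i = m
    · simpa [σ', hi] using hv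
    · simpa [σ', hi] using hσ i
  set B := Fintype.piFinset (fun _ : Fin r ↦ T) \ Fintype.piFinset (fun _ ↦ T.erase m)
  have hB : ∀ f ∉ B, ∏ l, σ' (f l) - ∏ l, σ (f l) = 0 := fun f hf ↦ by
    rw [sub_eq_zero]
    by_cases hfT : f ∈ Fintype.piFinset fun _ ↦ T
    · have hfm := Fintype.mem_piFinset.1 (not_and_not_right.1 (mem_sdiff.not.1 hf) hfT)
      exact prod_congr rfl fun l _ ↦ Function.update_of_ne (ne_of_mem_erase (hfm l)) _ _
    · obtain ⟨l, hl⟩ := not_forall.1 (Fintype.mem_piFinset.not.1 hfT)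
      have hfl : f l ≠ m := fun h ↦ hl (h ▸ hmT)
      rw [prod_eq_zero (mem_univ l) (by simp [σ', hfl, hσT _ hl] : σ' (f l) = 0),
        prod_eq_zero (mem_univ l) (hσT _ hl)]
  have habs : ∀ f : Fin r → ι, |∏ l, σ' (f l) - ∏ l, σ (f l)| ≤ 2 := fun f ↦ by
    have h1 : |∏ l, σ' (f l)| ≤ 1 := by
      rw [abs_prod]; exact prod_le_one (fun _ _ ↦ abs_nonneg _) fun _ _ ↦ hσ' _
    have h2 : |∏ l, σ (f l)| ≤ 1 := by
      rw [abs_prod]; exact prod_le_one (fun _ _ ↦ abs_nonneg _) fun _ _ ↦ hσ _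
    linarith [abs_sub (∏ l, σ' (f l)) (∏ l, σ (f l))]
  have hcardB : (#B : ℝ) = (#T : ℝ) ^ r - ((#T : ℝ) - 1) ^ r := by
    rw [card_sdiff_of_subset (Fintype.piFinset_subset _ _ fun _ ↦ erase_subset _ _),
      Fintype.card_piFinset_const, Fintype.card_piFinset_const, card_erase_of_mem hmT,
      Nat.cast_sub (Nat.pow_le_pow_left (Nat.sub_le _ _) r), Nat.cast_pow, Nat.cast_pow,
      Nat.cast_sub (card_pos.2 ⟨m, hmT⟩), Nat.cast_one]
  calc ∑ f : Fin r → ι, |∏ l, σ' (f l) - ∏ l, σ (f l)|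
        = ∑ f ∈ B, |∏ l, σ' (f l) - ∏ l, σ (f l)| := by
        refine (sum_subset (subset_univ B) ?_).symm
        intro f _ hf
        rw [hB f hf, abs_zero]
    _ ≤ ∑ _f ∈ B, (2 : ℝ) := sum_le_sum fun f _ ↦ habs f
    _ = 2 * ((#T : ℝ) ^ r - ((#T : ℝ) - 1) ^ r) := by
        rw [sum_const, nsmul_eq_mul, hcardB, mul_comm]

lemma abs_tensorPowPairing_update_sub_le {σ : ι → ℝ} (hσ : ∀ i, |σ i| ≤ 1)
    (hs : 2 ≤ #{i | σ i ≠ 0}) (m : ι) {v : ℝ} (hv : |v| ≤ 1) {W : (Fin r → ι) → ℝ} {τ : ℝ}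
    (hτ : 0 ≤ τ) (hW : ∀ f, |W f| ≤ τ) :
    |tensorPowPairing r (Function.update σ m v) W - tensorPowPairing r σ W| ≤
      2 * 3 ^ r * ((#{i | σ i ≠ 0} : ℝ) - 1) ^ (r - 1) * τ := by
  set σ' := Function.update σ m v
  set S : Finset ι := {i | σ i ≠ 0}
  have hS : (2 : ℝ) ≤ #S := by exact_mod_cast hs
  have hST : (#S : ℝ) ≤ #(insert m S) := by exact_mod_cast card_le_card (subset_insert _ _)
  have hST' : (#(insert m S) : ℝ) ≤ #S + 1 := by exact_mod_cast card_insert_le _ _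
  have hσS : ∀ i ∉ insert m S, σ i = 0 := fun i hi ↦ by
    simpa [S] using (not_or.1 (mem_insert.not.1 hi)).2
  have hsum : ∑ f : Fin r → ι, |∏ l, σ' (f l) - ∏ l, σ (f l)| ≤
      2 * (3 ^ r * ((#S : ℝ) - 1) ^ (r - 1)) :=
    (sum_abs_prod_update_sub_prod_le hσ hσS (mem_insert_self m S) hv).trans
      (by gcongr; exact pow_sub_sub_one_pow_le r (by linarith) (by linarith) (by linarith))
  calc |tensorPowPairing r σ' W - tensorPowPairing r σ W|
      = |∑ f : Fin r → ι, (∏ l, σ' (f l) - ∏ l, σ (f l)) * W f| := by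
        rw [tensorPowPairing, tensorPowPairing, ← sum_sub_distrib]
        simp only [sub_mul]
    _ ≤ ∑ f : Fin r → ι, |∏ l, σ' (f l) - ∏ l, σ (f l)| * τ := by
        refine (abs_sum_le_sum_abs _ _).trans (sum_le_sum fun f _ ↦ ?_)
        rw [abs_mul]
        exact mul_le_mul_of_nonneg_left (hW f) (abs_nonneg _)
    _ ≤ 2 * (3 ^ r * ((#S : ℝ) - 1) ^ (r - 1)) * τ := by
        rw [← sum_mul]
        exact mul_le_mul_of_nonneg_right hsum hτ
    _ = 2 * 3 ^ r * ((#S : ℝ) - 1) ^ (r - 1) * τ := by ring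

end TensorPairing

lemma hasSubgaussianMGF_gaussianReal_zero_one :
    HasSubgaussianMGF (fun x : ℝ ↦ x) 1 (gaussianReal 0 1) where
  integrable_exp_mul := integrable_exp_mul_gaussianReal
  mgf_le t := by simp [mgf_fun_id_gaussianReal]

lemma gaussianReal_measureReal_le_abs_le {τ : ℝ} (hτ : 0 ≤ τ) :
    (gaussianReal 0 1).real {x | τ ≤ |x|} ≤ 2 * exp (-τ ^ 2 / 2) := by
  have hX := hasSubgaussianMGF_gaussianReal_zero_one
  have hsplit : {x : ℝ | τ ≤ |x|} = {x | τ ≤ x} ∪ {x | τ ≤ (-fun x : ℝ ↦ x) x} := by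
    ext x; simp [le_abs', or_comm, le_neg]
  calc (gaussianReal 0 1).real {x | τ ≤ |x|}
      ≤ (gaussianReal 0 1).real {x | τ ≤ x} +
          (gaussianReal 0 1).real {x | τ ≤ (-fun x : ℝ ↦ x) x} := by
        rw [hsplit]; exact measureReal_union_le _ _
    _ ≤ exp (-τ ^ 2 / (2 * (1 : NNReal))) + exp (-τ ^ 2 / (2 * (1 : NNReal))) :=
        add_le_add (hX.measure_ge_le hτ) (hX.neg.measure_ge_le hτ)
    _ = 2 * exp (-τ ^ 2 / 2) := by simp; ring

lemma pi_gaussianReal_measureReal_exists_le_abs_le {ι : Type*} [Fintype ι] {τ : ℝ}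
    (hτ : 0 ≤ τ) :
    (Measure.pi fun _ : ι ↦ gaussianReal 0 1).real {W | ∃ i, τ ≤ |W i|} ≤
      Fintype.card ι * (2 * exp (-τ ^ 2 / 2)) := by
  have hunion : {W : ι → ℝ | ∃ i, τ ≤ |W i|} = ⋃ i, Function.eval i ⁻¹' {x | τ ≤ |x|} := by
    ext W; simp
  rw [hunion]
  refine (measureReal_iUnion_fintype_le _).trans ?_
  rw [← nsmul_eq_mul, ← card_univ, ← sum_const]
  refine sum_le_sum fun i _ ↦ ?_
  rw [measureReal_def, ← Measure.map_apply (measurable_pi_apply i)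
    (measurableSet_le measurable_const measurable_abs), (measurePreserving_eval _ i).map_eq]
  exact gaussianReal_measureReal_le_abs_le hτ

lemma natCast_pow_mul_two_mul_exp_le_rpow {n r : ℕ} (hn : 2 ≤ n) (hr : 2 ≤ r) :
    (n : ℝ) ^ r * (2 * exp (-((√(2 * r) + 1) * √(log n)) ^ 2 / 2)) ≤
      (n : ℝ) ^ (-(1 / 2) : ℝ) := by
  have hn0 : (0 : ℝ) < n := by positivity
  have hlog2 : log 2 ≤ log n := log_le_log (by norm_num) (by exact_mod_cast hn)
  have hlog : 0 < log n := (log_pos (by norm_num)).trans_le hlog2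
  have hsqrt : 2 ≤ √(2 * r) := le_sqrt_of_sq_le (by norm_cast; omega)
  have hlhs : (n : ℝ) ^ r * (2 * exp (-((√(2 * r) + 1) * √(log n)) ^ 2 / 2)) =
      exp (r * log n + log 2 - (√(2 * r) + 1) ^ 2 * log n / 2) := by
    rw [exp_sub, exp_add, ← log_pow, exp_log (by positivity), exp_log two_pos, mul_pow,
      sq_sqrt hlog.le, neg_div, exp_neg]
    ring
  rw [hlhs, rpow_def_of_pos hn0]
  gcongr
  nlinarith [sq_sqrt (by positivity : (0 : ℝ) ≤ 2 * r), mul_le_mul_of_nonneg_right hsqrt hlog.le]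

lemma ofReal_one_sub_le_pi_gaussianReal_forall_abs_le {n r : ℕ} (hn : 2 ≤ n) (hr : 2 ≤ r) :
    ENNReal.ofReal (1 - (n : ℝ) ^ (-(1 / 2) : ℝ)) ≤
      Measure.pi (fun _ : Fin r → Fin n ↦ gaussianReal 0 1)
        {W | ∀ f, |W f| ≤ (√(2 * r) + 1) * √(log n)} := by
  set τ := (√(2 * r) + 1) * √(log n)
  set μ := Measure.pi fun _ : Fin r → Fin n ↦ gaussianReal 0 1
  set E := {W : (Fin r → Fin n) → ℝ | ∀ f, |W f| ≤ τ}
  have hE : MeasurableSet E := by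
    simp only [E, Set.ofPred_forall]
    exact .iInter fun f ↦ measurableSet_le (by fun_prop) measurable_const
  have hEc : Eᶜ ⊆ {W | ∃ f, τ ≤ |W f|} := fun W hW ↦ by
    simpa [E] using fun h : ∀ f, |W f| < τ ↦ hW fun f ↦ (h f).le
  have htail : μ.real Eᶜ ≤ (n : ℝ) ^ (-(1 / 2) : ℝ) := calc
    μ.real Eᶜ ≤ μ.real {W | ∃ f, τ ≤ |W f|} := measureReal_mono hEc
    _ ≤ Fintype.card (Fin r → Fin n) * (2 * exp (-τ ^ 2 / 2)) :=
      pi_gaussianReal_measureReal_exists_le_abs_le (by positivity)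
    _ ≤ (n : ℝ) ^ (-(1 / 2) : ℝ) := by
      rw [Fintype.card_fun, Fintype.card_fin, Fintype.card_fin, Nat.cast_pow]
      exact natCast_pow_mul_two_mul_exp_le_rpow hn hr
  rw [← ofReal_measureReal]
  gcongr
  linarith [probReal_compl_eq_one_sub (μ := μ) hE]

section Hamiltonian

variable {n r k : ℕ} {lam γ : ℝ} {θ : Fin n → ℝ} {W : (Fin r → Fin n) → ℝ}

lemma Ham_eq (σ : Fin n → ℝ) :
    Ham n r k lam γ θ W σ = lam / (k : ℝ) ^ ((r : ℝ) / 2) * (∑ m, σ m * θ m) ^ r +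
      tensorPowPairing r σ W - γ * (suppCard σ : ℝ) ^ r := by
  rw [Ham, tensorPowPairing, Fintype.sum_pow, mul_sum, ← sum_add_distrib]
  congr 2 with f
  rw [prod_mul_distrib]
  ring

lemma sum_update_mul (σ : Fin n → ℝ) (m : Fin n) (v : ℝ) :
    ∑ i, Function.update σ m v i * θ i = ∑ i, σ i * θ i + (v - σ m) * θ m := by
  rw [← add_sum_erase _ _ (mem_univ m), ← add_sum_erase _ (fun i ↦ σ i * θ i) (mem_univ m),
    sum_congr rfl fun i hi ↦ by rw [Function.update_of_ne (ne_of_mem_erase hi)],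
    Function.update_self]
  ring

lemma suppCard_update_zero {σ : Fin n → ℝ} {m : Fin n} (hm : σ m ≠ 0) :
    suppCard (Function.update σ m 0) = suppCard σ - 1 := by
  rw [suppCard, suppCard, ← card_erase_of_mem (by simpa using hm)]
  congr 1
  ext i
  by_cases hi : i = m <;> simp [hi]

lemma suppCard_update_of_ne_zero {σ : Fin n → ℝ} {m : Fin n} (hm : σ m ≠ 0) {v : ℝ}
    (hv : v ≠ 0) : suppCard (Function.update σ m v) = suppCard σ := by
  rw [suppCard, suppCard]
  congr 1
  ext i
  by_cases hi : i = m <;> simp [hi, hm, hv]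

lemma suppCard_update_of_eq_zero {σ : Fin n → ℝ} {m : Fin n} (hm : σ m = 0) {v : ℝ}
    (hv : v ≠ 0) : suppCard (Function.update σ m v) = suppCard σ + 1 := by
  rw [suppCard, suppCard, ← card_insert_of_notMem (by simpa using hm)]
  congr 1
  ext i
  by_cases hi : i = m <;> simp [hi, hv]

end Hamiltonian

lemma hammingDist_update_of_ne {ι : Type*} [Fintype ι] [DecidableEq ι] {β : Type*}
    [DecidableEq β] {x : ι → β} {m : ι} {v : β} (hv : v ≠ x m) :
    hammingDist x (Function.update x m v) = 1 := by
  rw [hammingDist, card_eq_one]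
  refine ⟨m, eq_singleton_iff_unique_mem.2 ⟨by simpa using hv.symm, fun i hi ↦ ?_⟩⟩
  by_contra h
  simp [h] at hi

section Ternary

variable {x y : ℝ}

lemma abs_le_one_of_ternary (hx : x = -1 ∨ x = 0 ∨ x = 1) : |x| ≤ 1 := by
  rcases hx with rfl | rfl | rfl <;> norm_num

lemma abs_eq_one_of_ternary (hx : x = -1 ∨ x = 0 ∨ x = 1) (hx0 : x ≠ 0) : |x| = 1 := by
  rcases hx with rfl | rfl | rfl <;> norm_num at *

lemma eq_of_ternary_of_ne_neg (hx : x = -1 ∨ x = 0 ∨ x = 1) (hy : y = -1 ∨ y = 0 ∨ y = 1)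
    (hx0 : x ≠ 0) (hy0 : y ≠ 0) (hxy : x ≠ -y) : x = y := by
  rcases hx with rfl | rfl | rfl <;> rcases hy with rfl | rfl | rfl <;> norm_num at *

end Ternary

section Moves

variable {n r k : ℕ} {lam γ τ : ℝ} {θ σ : Fin n → ℝ} {W : (Fin r → Fin n) → ℝ}

lemma Ham_lt_Ham_update (hσ : ∀ i, |σ i| ≤ 1) (hs : 2 ≤ suppCard σ) (hτ : 0 ≤ τ)
    (hW : ∀ f, |W f| ≤ τ) (m : Fin n) {v : ℝ} (hv : |v| ≤ 1)
    (hgain : 2 * 3 ^ r * ((suppCard σ : ℝ) - 1) ^ (r - 1) * τ <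
      lam / (k : ℝ) ^ ((r : ℝ) / 2) *
          ((∑ i, Function.update σ m v i * θ i) ^ r - (∑ i, σ i * θ i) ^ r) -
        γ * ((suppCard (Function.update σ m v) : ℝ) ^ r - (suppCard σ : ℝ) ^ r)) :
    Ham n r k lam γ θ W σ < Ham n r k lam γ θ W (Function.update σ m v) := by
  have hnoise : |tensorPowPairing r (Function.update σ m v) W - tensorPowPairing r σ W| ≤
      2 * 3 ^ r * ((suppCard σ : ℝ) - 1) ^ (r - 1) * τ :=
    abs_tensorPowPairing_update_sub_le hσ hs m hv hτ hW
  rw [Ham_eq, Ham_eq]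
  linarith [(abs_le.1 hnoise).1]

lemma Ham_lt_Ham_update_zero (hr : 2 ≤ r) (hσ : ∀ i, |σ i| ≤ 1) (hs : 2 ≤ suppCard σ)
    (hτ : 0 ≤ τ) (hW : ∀ f, |W f| ≤ τ) {m : Fin n} (hm : σ m ≠ 0) (hθm : θ m = 0)
    (hγ : 3 ^ r * τ < γ) :
    Ham n r k lam γ θ W σ < Ham n r k lam γ θ W (Function.update σ m 0) := by
  refine Ham_lt_Ham_update hσ hs hτ hW m (by norm_num) ?_
  rw [sum_update_mul, hθm, suppCard_update_zero hm, Nat.cast_sub (by omega), Nat.cast_one]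
  have hs' : (2 : ℝ) ≤ suppCard σ := by exact_mod_cast hs
  set s : ℝ := (suppCard σ : ℝ)
  have hγ0 : 0 ≤ γ := (by positivity : (0 : ℝ) ≤ 3 ^ r * τ).trans hγ.le
  have hpow : r * (s - 1) ^ (r - 1) ≤ s ^ r - (s - 1) ^ r := by
    simpa using natCast_mul_pow_pred_mul_sub_le_pow_sub_pow r (by linarith : 0 ≤ s - 1)
      (by linarith : s - 1 ≤ s)
  have hr' : (2 : ℝ) ≤ r := by exact_mod_cast hr
  have hQ : 0 < (s - 1) ^ (r - 1) := pow_pos (by linarith) _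
  calc 2 * 3 ^ r * (s - 1) ^ (r - 1) * τ = 2 * (3 ^ r * τ) * (s - 1) ^ (r - 1) := by ring
    _ < 2 * γ * (s - 1) ^ (r - 1) := by gcongr
    _ ≤ γ * (r * (s - 1) ^ (r - 1)) := by rw [← mul_assoc, mul_comm γ]; gcongr
    _ ≤ γ * (s ^ r - (s - 1) ^ r) := by gcongr
    _ = _ := by ring

lemma Ham_lt_Ham_update_flip (hr : 2 ≤ r) (hσ : ∀ i, |σ i| ≤ 1) (hs : 2 ≤ suppCard σ)
    (hτ : 0 ≤ τ) (hW : ∀ f, |W f| ≤ τ) (hM : 1 ≤ ∑ i, σ i * θ i) {m : Fin n} (hθm : |θ m| = 1)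
    (hflip : σ m = -θ m)
    (hsig : 3 ^ r * τ * ((suppCard σ : ℝ) - 1) ^ (r - 1) <
      2 * (lam / (k : ℝ) ^ ((r : ℝ) / 2)) * ((∑ i, σ i * θ i) - 1) ^ (r - 1)) :
    Ham n r k lam γ θ W σ < Ham n r k lam γ θ W (Function.update σ m (θ m)) := by
  refine Ham_lt_Ham_update hσ hs hτ hW m hθm.le ?_
  have hθm0 : θ m ≠ 0 := by rintro h; simp [h] at hθm
  have hσm0 : σ m ≠ 0 := by rw [hflip]; exact neg_ne_zero.2 hθm0
  rw [sum_update_mul, hflip, suppCard_update_of_ne_zero hσm0 hθm0, sub_self, mul_zero, sub_zero,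
    ← hflip]
  set β := lam / (k : ℝ) ^ ((r : ℝ) / 2)
  set M := ∑ i, σ i * θ i
  have hθ2 : (θ m - σ m) * θ m = 2 := by
    rw [hflip, sub_neg_eq_add, ← two_mul, mul_assoc, ← abs_mul_abs_self, hθm]; norm_num
  have hβ : 0 ≤ β := by
    by_contra! hβ
    have hs' : (2 : ℝ) ≤ suppCard σ := by exact_mod_cast hs
    have h1 : 0 ≤ 3 ^ r * τ * ((suppCard σ : ℝ) - 1) ^ (r - 1) :=
      mul_nonneg (by positivity) (pow_nonneg (by linarith) _)
    have h2 : 2 * β * (M - 1) ^ (r - 1) ≤ 0 :=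
      mul_nonpos_of_nonpos_of_nonneg (by linarith) (pow_nonneg (by linarith) _)
    linarith
  have hpow : 4 * (M - 1) ^ (r - 1) ≤ (M + 2) ^ r - M ^ r := by
    have hr' : (2 : ℝ) ≤ r := by exact_mod_cast hr
    have h := natCast_mul_pow_pred_mul_sub_le_pow_sub_pow r (by linarith : 0 ≤ M)
      (by linarith : M ≤ M + 2)
    have hM1 : (M - 1) ^ (r - 1) ≤ M ^ (r - 1) := by gcongr; linarith
    nlinarith [pow_nonneg (by linarith : (0 : ℝ) ≤ M) (r - 1)]
  rw [hθ2]
  calc 2 * 3 ^ r * ((suppCard σ : ℝ) - 1) ^ (r - 1) * τ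
      = 2 * (3 ^ r * τ * ((suppCard σ : ℝ) - 1) ^ (r - 1)) := by ring
    _ < 2 * (2 * β * (M - 1) ^ (r - 1)) := by gcongr
    _ = β * (4 * (M - 1) ^ (r - 1)) := by ring
    _ ≤ β * ((M + 2) ^ r - M ^ r) := by gcongr

lemma Ham_lt_Ham_update_add (hr : 2 ≤ r) (hσ : ∀ i, |σ i| ≤ 1) (hs : 2 ≤ suppCard σ)
    (hτ : 0 ≤ τ) (hW : ∀ f, |W f| ≤ τ) (hMs : ∑ i, σ i * θ i = suppCard σ) {m : Fin n}
    (hθm : |θ m| = 1) (hm : σ m = 0) (hβγ : 3 ^ r * τ + γ < lam / (k : ℝ) ^ ((r : ℝ) / 2)) :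
    Ham n r k lam γ θ W σ < Ham n r k lam γ θ W (Function.update σ m (θ m)) := by
  refine Ham_lt_Ham_update hσ hs hτ hW m hθm.le ?_
  have hθm0 : θ m ≠ 0 := by rintro h; simp [h] at hθm
  have hs' : (2 : ℝ) ≤ suppCard σ := by exact_mod_cast hs
  rw [sum_update_mul, hm, sub_zero, ← abs_mul_abs_self, hθm, mul_one, hMs,
    suppCard_update_of_eq_zero hm hθm0, Nat.cast_add, Nat.cast_one]
  set β := lam / (k : ℝ) ^ ((r : ℝ) / 2)
  set s : ℝ := (suppCard σ : ℝ)
  have hQ : 0 < (s - 1) ^ (r - 1) := pow_pos (by linarith) _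
  have hpow : 2 * (s - 1) ^ (r - 1) ≤ (s + 1) ^ r - s ^ r := by
    have hr' : (2 : ℝ) ≤ r := by exact_mod_cast hr
    have h := natCast_mul_pow_pred_mul_sub_le_pow_sub_pow r (by linarith : 0 ≤ s)
      (by linarith : s ≤ s + 1)
    have hs1 : (s - 1) ^ (r - 1) ≤ s ^ (r - 1) := by gcongr <;> linarith
    nlinarith [pow_nonneg (by linarith : (0 : ℝ) ≤ s) (r - 1)]
  have hβγ0 : 0 ≤ β - γ := by linarith [(by positivity : (0 : ℝ) ≤ 3 ^ r * τ)]
  calc 2 * 3 ^ r * (s - 1) ^ (r - 1) * τ = 3 ^ r * τ * (2 * (s - 1) ^ (r - 1)) := by ring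
    _ < (β - γ) * (2 * (s - 1) ^ (r - 1)) := by gcongr; linarith
    _ ≤ (β - γ) * ((s + 1) ^ r - s ^ r) := by gcongr
    _ = _ := by ring

end Moves

theorem exists_hammingDist_eq_one_Ham_lt {n r k : ℕ} {lam γ τ : ℝ} {θ σ : Fin n → ℝ}
    {W : (Fin r → Fin n) → ℝ} (hr : 2 ≤ r) (hθ : ∀ m, θ m = -1 ∨ θ m = 0 ∨ θ m = 1)
    (hσ : ∀ m, σ m = -1 ∨ σ m = 0 ∨ σ m = 1) (hne : σ ≠ θ) (hs : 2 ≤ suppCard σ)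
    (hM : 1 ≤ ∑ i, σ i * θ i) (hτ : 0 ≤ τ) (hW : ∀ f, |W f| ≤ τ) (hγ : 3 ^ r * τ < γ)
    (hβγ : 3 ^ r * τ + γ < lam / (k : ℝ) ^ ((r : ℝ) / 2))
    (hsig : 3 ^ r * τ * ((suppCard σ : ℝ) - 1) ^ (r - 1) <
      2 * (lam / (k : ℝ) ^ ((r : ℝ) / 2)) * ((∑ i, σ i * θ i) - 1) ^ (r - 1)) :
    ∃ σ' : Fin n → ℝ, (∀ m, σ' m = -1 ∨ σ' m = 0 ∨ σ' m = 1) ∧ hammingDist σ σ' = 1 ∧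
      Ham n r k lam γ θ W σ < Ham n r k lam γ θ W σ' := by
  suffices ∃ m v, (v = -1 ∨ v = 0 ∨ v = 1) ∧ v ≠ σ m ∧
      Ham n r k lam γ θ W σ < Ham n r k lam γ θ W (Function.update σ m v) by
    obtain ⟨m, v, hv, hvm, hlt⟩ := this
    refine ⟨Function.update σ m v, fun i ↦ ?_, hammingDist_update_of_ne hvm, hlt⟩
    by_cases hi : i = m
    · simpa [hi] using hv
    · simpa [hi] using hσ i
  have hσ1 : ∀ i, |σ i| ≤ 1 := fun i ↦ abs_le_one_of_ternary (hσ i)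
  by_cases hdrop : ∃ m, σ m ≠ 0 ∧ θ m = 0
  · obtain ⟨m, hm, hθm⟩ := hdrop
    exact ⟨m, 0, by norm_num, hm.symm, Ham_lt_Ham_update_zero hr hσ1 hs hτ hW hm hθm hγ⟩
  by_cases hflip : ∃ m, σ m ≠ 0 ∧ σ m = -θ m
  · obtain ⟨m, hm, hσθ⟩ := hflip
    have hθm : θ m ≠ 0 := fun h ↦ hm (by rw [hσθ, h, neg_zero])
    refine ⟨m, θ m, hθ m, fun h ↦ hθm (by linarith), ?_⟩
    exact Ham_lt_Ham_update_flip hr hσ1 hs hτ hW hM (abs_eq_one_of_ternary (hθ m) hθm) hσθ hsig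
  push Not at hdrop hflip
  have hagree : ∀ i, σ i ≠ 0 → σ i = θ i := fun i hi ↦
    eq_of_ternary_of_ne_neg (hσ i) (hθ i) hi (hdrop i hi) (hflip i hi)
  obtain ⟨m, hm⟩ := Function.ne_iff.1 hne
  have hσm : σ m = 0 := by by_contra h; exact hm (hagree m h)
  have hθm : θ m ≠ 0 := fun h ↦ hm (hσm.trans h.symm)
  have hMs : ∑ i, σ i * θ i = suppCard σ := by
    rw [suppCard, card_filter, Nat.cast_sum]
    refine sum_congr rfl fun i _ ↦ ?_
    by_cases hi : σ i = 0
    · simp [hi]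
    · rw [if_pos hi, Nat.cast_one, ← hagree i hi, ← abs_mul_abs_self,
        abs_eq_one_of_ternary (hσ i) hi, mul_one]
  refine ⟨m, θ m, hθ m, by rwa [hσm], ?_⟩
  exact Ham_lt_Ham_update_add hr hσ1 hs hτ hW hMs (abs_eq_one_of_ternary (hθ m) hθm) hσm hβγ

theorem stmt_6_general (n r k : ℕ) (hn : 2 ≤ n) (hr : 2 ≤ r) (hk : 1 ≤ k)
    (θ : Fin n → ℝ) (hθ : ∀ m, θ m = -1 ∨ θ m = 0 ∨ θ m = 1)
    (Cγ Clam Cr C' γ lam : ℝ)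
    (hCr : Cr = 2 * 3 ^ r * (Real.sqrt (2 * r) + 1))
    (hC' : C' = Cγ + Cr + 1)
    (hγ : γ = Cγ * Real.sqrt (Real.log n))
    (hlam : Clam * (k : ℝ) ^ ((r : ℝ) / 2) * Real.sqrt (Real.log n) ≤ lam)
    (hCγ : 1 + Cr ≤ Cγ) (hClam : C' ≤ Clam) :
    ENNReal.ofReal (1 - (n : ℝ) ^ (-(1/2) : ℝ)) ≤
      Measure.pi (fun _ : Fin r → Fin n => gaussianReal 0 1)
        {W : (Fin r → Fin n) → ℝ |
          ∀ σ : Fin n → ℝ, memA n r k lam C' θ σ → σ ≠ θ →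
          ∃ σ' : Fin n → ℝ, (∀ m, σ' m = -1 ∨ σ' m = 0 ∨ σ' m = 1) ∧
            (Finset.univ.filter (fun m => σ m ≠ σ' m)).card = 1 ∧
            Ham n r k lam γ θ W σ < Ham n r k lam γ θ W σ'} := by
  have hL : 0 < √(log n) := sqrt_pos.2 (log_pos (by exact_mod_cast hn))
  have hCr0 : 0 < Cr := by rw [hCr]; positivity
  have h3τ : 3 ^ r * ((√(2 * r) + 1) * √(log n)) = Cr / 2 * √(log n) := by rw [hCr]; ring
  have hβ : C' * √(log n) ≤ lam / (k : ℝ) ^ ((r : ℝ) / 2) := by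
    rw [le_div_iff₀ (by positivity)]
    nlinarith [mul_le_mul_of_nonneg_right hClam
      (by positivity : 0 ≤ (k : ℝ) ^ ((r : ℝ) / 2) * √(log n))]
  refine (ofReal_one_sub_le_pi_gaussianReal_forall_abs_le hn hr).trans
    (measure_mono fun W hW σ hσA hne ↦ ?_)
  obtain ⟨hσ, hsig, hs, hM⟩ := hσA
  have hs' : (2 : ℝ) ≤ suppCard σ := by exact_mod_cast hs
  have hQ : 0 < √(log n) * ((suppCard σ : ℝ) - 1) ^ (r - 1) := by
    have := pow_pos (by linarith : (0 : ℝ) < suppCard σ - 1) (r - 1)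
    positivity
  refine exists_hammingDist_eq_one_Ham_lt hr hθ hσ hne hs (by linarith) (by positivity) hW
    ?_ ?_ ?_
  · rw [h3τ, hγ]; nlinarith
  · rw [h3τ, hγ]; nlinarith
  · rw [h3τ]; nlinarith

/-- with probability at least 1 − n^{−1/2}, the only local maximum
of H in A is θ: every σ ∈ A with σ ≠ θ has a Hamming-distance-1 neighbor
σ' ∈ {−1,0,1}^n with H(σ') > H(σ). -/
theorem stmt_6 (n r k : ℕ) (hn : 2 ≤ n) (hr : 2 ≤ r) (hk : 1 ≤ k)
    (θ : Fin n → ℝ) (hθ : ∀ m, θ m = -1 ∨ θ m = 0 ∨ θ m = 1) (hθk : suppCard θ = k)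
    (C : ℝ) (hC : 0 < C) (hkC : (k : ℝ) ≤ C * Real.sqrt n)
    (Cγ Clam Cr C' γ lam : ℝ)
    (hCr : Cr = 2 * 3 ^ r * (Real.sqrt (2 * r) + 1))
    (hC' : C' = Cγ + Cr + 1)
    (hγ : γ = Cγ * Real.sqrt (Real.log n))
    (hlam : Clam * (k : ℝ) ^ ((r : ℝ) / 2) * Real.sqrt (Real.log n) ≤ lam)
    (hCγ : 1 + Cr ≤ Cγ) (hClam : C' ≤ Clam) :
    ENNReal.ofReal (1 - (n : ℝ) ^ (-(1/2) : ℝ)) ≤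
      Measure.pi (fun _ : Fin r → Fin n => gaussianReal 0 1)
        {W : (Fin r → Fin n) → ℝ |
          ∀ σ : Fin n → ℝ, memA n r k lam C' θ σ → σ ≠ θ →
          ∃ σ' : Fin n → ℝ, (∀ m, σ' m = -1 ∨ σ' m = 0 ∨ σ' m = 1) ∧
            (Finset.univ.filter (fun m => σ m ≠ σ' m)).card = 1 ∧
            Ham n r k lam γ θ W σ < Ham n r k lam γ θ W σ'} :=
  stmt_6_general n r k hn hr hk θ hθ Cγ Clam Cr C' γ lam hCr hC' hγ hlam hCγ hClam
end

section
/- Additive drift theorem: let a, b ∈ ℤ with a ≤ b − 1, let δ > 0, and let (X_t)_{t ≥ 0} be a sequence of integer-valued random variables on a probability space with a ≤ X_t ≤ b almost surely for all t. Assume that for every t and every integer s with a < s < b one has E[(X_{t+1} − X_t)·𝟙{X_t = s}] ≥ δ·P(X_t = s), and that X_{t+1} = X_t almost surely on the event {X_t ∈ {a,b}}. Let T = inf{t ≥ 0 : X_t = a or X_t = b}. Then T is almost surely finite and E[T] ≤ (b − a) / min(δ, 1). -/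
/-!
Since the boundary states are absorbing they carry no drift, so the drift hypothesis gives
`δ · P(a < X_t < b) ≤ E[X_{t+1} - X_t]`. Summed over `t < n` this telescopes to
`δ · ∑_{t<n} P(X_t ∉ {a, b}) ≤ E[X_n] - E[X_0] ≤ b - a`. The hitting time is at most the number
of times `t` with `X_t ∉ {a, b}`, whose expectation is that sum; hence `E[T] ≤ (b - a) / δ`, and
`T < ∞` almost surely.
-/

open MeasureTheory Finset
open scoped ENNReal

lemma iInf_natCast_le_tsum_indicator_compl {α : Type*} (s : ℕ → Set α) (x : α) :
    ⨅ (t : ℕ) (_ : x ∈ s t), (t : ℝ≥0∞) ≤ ∑' t, (s t)ᶜ.indicator 1 x := by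
  classical
  by_cases h : ∃ t, x ∈ s t
  · calc ⨅ (t : ℕ) (_ : x ∈ s t), (t : ℝ≥0∞)
        ≤ Nat.find h := iInf₂_le (Nat.find h) (Nat.find_spec h)
      _ = ∑ t ∈ range (Nat.find h), (s t)ᶜ.indicator 1 x := by
        rw [sum_congr rfl fun t ht => Set.indicator_of_mem (Nat.find_min h (mem_range.1 ht)) _]
        simp
      _ ≤ ∑' t, (s t)ᶜ.indicator 1 x := ENNReal.sum_le_tsum _
  · push Not at h
    simp [Set.indicator_of_mem, h]

section

variable {Ω : Type*} [MeasurableSpace Ω] {μ : Measure Ω}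

lemma integral_eq_sum_integral_indicator_fiber {β E : Type*} [MeasurableSpace β]
    [MeasurableSingletonClass β] [NormedAddCommGroup E] [NormedSpace ℝ E]
    {f : Ω → E} (hf : Integrable f μ) {Y : Ω → β} (hY : Measurable Y) (S : Finset β)
    (hYS : ∀ᵐ ω ∂μ, Y ω ∈ S) :
    ∫ ω, f ω ∂μ = ∑ s ∈ S, ∫ ω, {ω' | Y ω' = s}.indicator f ω ∂μ := by
  classical
  have hfs (s : β) : Integrable ({ω | Y ω = s}.indicator f) μ :=
    hf.indicator (hY (measurableSet_singleton s))
  rw [← integral_finsetSum S fun s _ => hfs s]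
  refine integral_congr_ae ?_
  filter_upwards [hYS] with ω hω
  simp [Set.indicator_apply, hω]

variable [IsProbabilityMeasure μ] {a b : ℤ}

lemma integrable_intCast_of_ae_mem_Icc {Y : Ω → ℤ} (hY : Measurable Y)
    (hYb : ∀ᵐ ω ∂μ, a ≤ Y ω ∧ Y ω ≤ b) : Integrable (fun ω => (Y ω : ℝ)) μ :=
  .of_mem_Icc a b (by fun_prop) <| by
    filter_upwards [hYb] with ω hω
    exact ⟨mod_cast hω.1, mod_cast hω.2⟩

lemma integral_intCast_mem_Icc {Y : Ω → ℤ} (hY : Measurable Y)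
    (hYb : ∀ᵐ ω ∂μ, a ≤ Y ω ∧ Y ω ≤ b) :
    (a : ℝ) ≤ ∫ ω, (Y ω : ℝ) ∂μ ∧ ∫ ω, (Y ω : ℝ) ∂μ ≤ b := by
  have hint := integrable_intCast_of_ae_mem_Icc hY hYb
  constructor
  · simpa using integral_mono_ae (integrable_const (a : ℝ)) hint <| by
      filter_upwards [hYb] with ω hω
      exact mod_cast hω.1
  · simpa using integral_mono_ae hint (integrable_const (b : ℝ)) <| by
      filter_upwards [hYb] with ω hω
      exact mod_cast hω.2

lemma mul_measureReal_Ioo_le_integral_sub {δ : ℝ} {Y Z : Ω → ℤ} (hY : Measurable Y)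
    (hZ : Measurable Z) (hYb : ∀ᵐ ω ∂μ, a ≤ Y ω ∧ Y ω ≤ b) (hZb : ∀ᵐ ω ∂μ, a ≤ Z ω ∧ Z ω ≤ b)
    (hdrift : ∀ s, a < s → s < b →
      δ * (μ {ω | Y ω = s}).toReal ≤
        ∫ ω, {ω' | Y ω' = s}.indicator (fun ω' => ((Z ω' - Y ω' : ℤ) : ℝ)) ω ∂μ)
    (habsorb : ∀ᵐ ω ∂μ, (Y ω = a ∨ Y ω = b) → Z ω = Y ω) :
    δ * (μ {ω | a < Y ω ∧ Y ω < b}).toReal ≤ ∫ ω, ((Z ω - Y ω : ℤ) : ℝ) ∂μ := by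
  set D : Ω → ℝ := fun ω => ((Z ω - Y ω : ℤ) : ℝ)
  have hD : Integrable D μ := by
    simpa [D, Pi.sub_def] using (integrable_intCast_of_ae_mem_Icc hZ hZb).sub
      (integrable_intCast_of_ae_mem_Icc hY hYb)
  have hboundary (s : ℤ) (hs : s = a ∨ s = b) : ∫ ω, {ω' | Y ω' = s}.indicator D ω ∂μ = 0 := by
    refine integral_eq_zero_of_ae ?_
    filter_upwards [habsorb] with ω hω
    by_cases h : Y ω = s
    · simp [D, Set.indicator_of_mem, h, hω (h ▸ hs)]
    · simp [Set.indicator_of_notMem, h]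
  have hinterior : {ω | a < Y ω ∧ Y ω < b} = Y ⁻¹' (Ioo a b : Finset ℤ) := by ext; simp
  calc δ * (μ {ω | a < Y ω ∧ Y ω < b}).toReal
      = ∑ s ∈ Ioo a b, δ * (μ {ω | Y ω = s}).toReal := by
        rw [← mul_sum, ← measureReal_def, hinterior,
          ← sum_measureReal_preimage_singleton _ fun s _ => hY (measurableSet_singleton s)]
        rfl
    _ ≤ ∑ s ∈ Ioo a b, ∫ ω, {ω' | Y ω' = s}.indicator D ω ∂μ :=
        sum_le_sum fun s hs => hdrift s (mem_Ioo.1 hs).1 (mem_Ioo.1 hs).2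
    _ = ∑ s ∈ Icc a b, ∫ ω, {ω' | Y ω' = s}.indicator D ω ∂μ :=
        sum_subset Ioo_subset_Icc_self fun s hs hs' => hboundary s <| by
          simp only [mem_Icc, mem_Ioo] at hs hs'
          omega
    _ = ∫ ω, D ω ∂μ := by
        refine (integral_eq_sum_integral_indicator_fiber hD hY _ ?_).symm
        filter_upwards [hYb] with ω hω
        simpa using hω

lemma sum_range_integral_sub_le {X : ℕ → Ω → ℤ} (hX : ∀ t, Measurable (X t))
    (hXb : ∀ t, ∀ᵐ ω ∂μ, a ≤ X t ω ∧ X t ω ≤ b) (n : ℕ) :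
    ∑ t ∈ range n, ∫ ω, ((X (t + 1) ω - X t ω : ℤ) : ℝ) ∂μ ≤ b - a := by
  have hint t := integrable_intCast_of_ae_mem_Icc (hX t) (hXb t)
  calc ∑ t ∈ range n, ∫ ω, ((X (t + 1) ω - X t ω : ℤ) : ℝ) ∂μ
      = ∑ t ∈ range n, (∫ ω, (X (t + 1) ω : ℝ) ∂μ - ∫ ω, (X t ω : ℝ) ∂μ) := by
        refine sum_congr rfl fun t _ => ?_
        rw [← integral_sub (hint (t + 1)) (hint t)]
        simp
    _ = ∫ ω, (X n ω : ℝ) ∂μ - ∫ ω, (X 0 ω : ℝ) ∂μ := sum_range_sub (fun t => ∫ ω, (X t ω : ℝ) ∂μ) n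
    _ ≤ b - a := by
        linarith [(integral_intCast_mem_Icc (hX n) (hXb n)).2,
          (integral_intCast_mem_Icc (hX 0) (hXb 0)).1]

lemma tsum_measure_interior_le {δ : ℝ} (hδ : 0 < δ) {X : ℕ → Ω → ℤ} (hX : ∀ t, Measurable (X t))
    (hXb : ∀ t, ∀ᵐ ω ∂μ, a ≤ X t ω ∧ X t ω ≤ b)
    (hdrift : ∀ (t : ℕ) (s : ℤ), a < s → s < b →
      δ * (μ {ω | X t ω = s}).toReal ≤
        ∫ ω, {ω' | X t ω' = s}.indicator (fun ω' => ((X (t + 1) ω' - X t ω' : ℤ) : ℝ)) ω ∂μ)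
    (habsorb : ∀ t, ∀ᵐ ω ∂μ, (X t ω = a ∨ X t ω = b) → X (t + 1) ω = X t ω) :
    ∑' t, μ {ω | a < X t ω ∧ X t ω < b} ≤ ENNReal.ofReal ((b - a) / δ) := by
  refine ENNReal.tsum_le_of_sum_range_le fun n => ?_
  have hstep t := mul_measureReal_Ioo_le_integral_sub (hX t) (hX (t + 1)) (hXb t) (hXb (t + 1))
    (hdrift t) (habsorb t)
  rw [← ENNReal.ofReal_toReal (ENNReal.sum_ne_top.2 fun t _ => measure_ne_top μ _),
    ENNReal.toReal_sum fun t _ => measure_ne_top μ _]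
  refine ENNReal.ofReal_le_ofReal ?_
  rw [le_div_iff₀' hδ, mul_sum]
  exact (sum_le_sum fun t _ => hstep t).trans (sum_range_integral_sub_le hX hXb n)

lemma lintegral_tsum_indicator_compl_boundary_le {δ : ℝ} (hδ : 0 < δ) {X : ℕ → Ω → ℤ}
    (hX : ∀ t, Measurable (X t)) (hXb : ∀ t, ∀ᵐ ω ∂μ, a ≤ X t ω ∧ X t ω ≤ b)
    (hdrift : ∀ (t : ℕ) (s : ℤ), a < s → s < b →
      δ * (μ {ω | X t ω = s}).toReal ≤
        ∫ ω, {ω' | X t ω' = s}.indicator (fun ω' => ((X (t + 1) ω' - X t ω' : ℤ) : ℝ)) ω ∂μ)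
    (habsorb : ∀ t, ∀ᵐ ω ∂μ, (X t ω = a ∨ X t ω = b) → X (t + 1) ω = X t ω) :
    ∫⁻ ω, ∑' t, {ω | X t ω = a ∨ X t ω = b}ᶜ.indicator 1 ω ∂μ ≤
      ENNReal.ofReal ((b - a) / δ) := by
  have hB t : MeasurableSet {ω | X t ω = a ∨ X t ω = b} :=
    (hX t (measurableSet_singleton a)).union (hX t (measurableSet_singleton b))
  calc ∫⁻ ω, ∑' t, {ω | X t ω = a ∨ X t ω = b}ᶜ.indicator 1 ω ∂μ
      = ∑' t, μ {ω | X t ω = a ∨ X t ω = b}ᶜ := by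
        rw [lintegral_tsum fun t => (measurable_one.indicator (hB t).compl).aemeasurable]
        exact tsum_congr fun t => lintegral_indicator_one (hB t).compl
    _ = ∑' t, μ {ω | a < X t ω ∧ X t ω < b} := by
        refine tsum_congr fun t => measure_congr <| Filter.eventuallyEq_set.2 ?_
        filter_upwards [hXb t] with ω hω
        change ¬(X t ω = a ∨ X t ω = b) ↔ a < X t ω ∧ X t ω < b
        omega
    _ ≤ ENNReal.ofReal ((b - a) / δ) := tsum_measure_interior_le hδ hX hXb hdrift habsorb

end

theorem stmt_11_general {Ω : Type*} [MeasurableSpace Ω] (μ : Measure Ω) [IsProbabilityMeasure μ]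
    (a b : ℤ) (δ : ℝ) (hδ : 0 < δ)
    (X : ℕ → Ω → ℤ) (hXmeas : ∀ t, Measurable (X t))
    (hbound : ∀ t, ∀ᵐ ω ∂μ, a ≤ X t ω ∧ X t ω ≤ b)
    (hdrift : ∀ (t : ℕ) (s : ℤ), a < s → s < b →
      δ * (μ {ω | X t ω = s}).toReal ≤
        ∫ ω, Set.indicator {ω' | X t ω' = s}
          (fun ω' => ((X (t + 1) ω' - X t ω' : ℤ) : ℝ)) ω ∂μ)
    (habsorb : ∀ t, ∀ᵐ ω ∂μ, (X t ω = a ∨ X t ω = b) → X (t + 1) ω = X t ω) :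
    (∀ᵐ ω ∂μ, ∃ t, X t ω = a ∨ X t ω = b) ∧
    ∫⁻ ω, (⨅ (t : ℕ) (_ : X t ω = a ∨ X t ω = b), (t : ℝ≥0∞)) ∂μ ≤
      ENNReal.ofReal (((b - a : ℤ) : ℝ) / min δ 1) := by
  set N : Ω → ℝ≥0∞ := fun ω => ∑' t, {ω | X t ω = a ∨ X t ω = b}ᶜ.indicator 1 ω
  have hN : Measurable N := .tsum fun t => measurable_one.indicator
    ((hXmeas t (measurableSet_singleton a)).union (hXmeas t (measurableSet_singleton b))).compl
  have hT ω : ⨅ (t : ℕ) (_ : X t ω = a ∨ X t ω = b), (t : ℝ≥0∞) ≤ N ω :=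
    iInf_natCast_le_tsum_indicator_compl _ ω
  have hab : a ≤ b := by
    obtain ⟨ω, hω⟩ := (hbound 0).exists
    exact hω.1.trans hω.2
  have hNint : ∫⁻ ω, N ω ∂μ ≤ ENNReal.ofReal (((b - a : ℤ) : ℝ) / min δ 1) := by
    refine (lintegral_tsum_indicator_compl_boundary_le hδ hXmeas hbound hdrift habsorb).trans ?_
    push_cast
    gcongr
    · exact sub_nonneg.2 (mod_cast hab)
    · exact min_le_left δ 1
  refine ⟨?_, (lintegral_mono hT).trans hNint⟩
  filter_upwards [ae_lt_top hN (hNint.trans_lt ENNReal.ofReal_lt_top).ne] with ω hω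
  by_contra h
  have hTω : ⨅ (t : ℕ) (_ : X t ω = a ∨ X t ω = b), (t : ℝ≥0∞) = ⊤ := by simpa using h
  exact ((hT ω).trans_lt hω).ne hTω

/-- additive drift theorem: if (X_t) takes values in [a,b] ∩ ℤ,
has drift at least δ towards b away from the boundary, and is absorbed at the
boundary {a,b}, then the boundary hitting time T is a.s. finite and
E[T] ≤ (b−a)/min(δ,1). -/
theorem stmt_11 {Ω : Type*} [MeasurableSpace Ω] (μ : Measure Ω) [IsProbabilityMeasure μ]
    (a b : ℤ) (hab : a ≤ b - 1) (δ : ℝ) (hδ : 0 < δ)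
    (X : ℕ → Ω → ℤ) (hXmeas : ∀ t, Measurable (X t))
    (hbound : ∀ t, ∀ᵐ ω ∂μ, a ≤ X t ω ∧ X t ω ≤ b)
    (hdrift : ∀ (t : ℕ) (s : ℤ), a < s → s < b →
      δ * (μ {ω | X t ω = s}).toReal ≤
        ∫ ω, Set.indicator {ω' | X t ω' = s}
          (fun ω' => ((X (t + 1) ω' - X t ω' : ℤ) : ℝ)) ω ∂μ)
    (habsorb : ∀ t, ∀ᵐ ω ∂μ, (X t ω = a ∨ X t ω = b) → X (t + 1) ω = X t ω) :
    (∀ᵐ ω ∂μ, ∃ t, X t ω = a ∨ X t ω = b) ∧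
    ∫⁻ ω, (⨅ (t : ℕ) (_ : X t ω = a ∨ X t ω = b), (t : ℝ≥0∞)) ∂μ ≤
      ENNReal.ofReal (((b - a : ℤ) : ℝ) / min δ 1) :=
  stmt_11_general μ a b δ hδ X hXmeas hbound hdrift habsorb
end

section
/- Subset Gaussian cloning has an independent Gaussian law: let N, M, T ≥ 1 be integers, μ ∈ ℝ^N, and let Δ_1, …, Δ_T be a fixed sequence of subsets of {1,…,N} such that every i ∈ {1,…,N} belongs to at most M of the sets Δ_t. On a probability space let Z_1,…,Z_N be i.i.d. N(0,1) and let (G_i^j)_{i ∈ [N], j ∈ [M]} be i.i.d. N(0,M), with all of these random variables mutually independent. Set Ḡ_i = (1/M)·Σ_{j=1}^M G_i^j and, for each t, b_i^t = #{t' ≤ t : i ∈ Δ_{t'}}. Define, for each t ∈ {1,…,T}, the random vector X_t = (μ_i + Z_i + G_i^{b_i^t} − Ḡ_i)_{i ∈ Δ_t}. Then the vectors X_1, …, X_T are mutually independent, and for each t the vector X_t is Gaussian with mean (μ_i)_{i ∈ Δ_t} and covariance M·Id; equivalently, the joint law of the family (X_{t,i})_{t ∈ [T], i ∈ Δ_t}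 is the product over pairs (t, i) with i ∈ Δ_t of the Gaussian measure on ℝ with mean μ_i and variance M. -/
/-!
Under the product Gaussian law of `(Z, G)`, each `X_{t,i} - μ_i = Z_i + G_i^{b_i^t} - Ḡ_i` is a
linear form in this Gaussian vector, so the family `X` is jointly Gaussian and its law is
determined by its covariances. Coordinates at different sites `i` use disjoint, independent
inputs. At a common site `i` and times `t ≠ t'` the clone indices `b_i^t ≠ b_i^{t'}` differ,
since `b_i^·` counts visits of `i` and `i` is visited at most `M` times; then
`Cov = Var Z_i + Cov(G^b - Ḡ, G^{b'} - Ḡ) = 1 + (0 - 1 - 1 + 1) = 0`, while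
`Var X_{t,i} = 1 + (M - 1 - 1 + 1) = M`. Uncorrelated jointly Gaussian variables are independent.
-/

open MeasureTheory ProbabilityTheory Finset
open scoped NNReal

section GaussianPi

variable {ι κ : Type*} [Fintype ι] [Fintype κ] (v : ι → ℝ≥0)

lemma hasLaw_eval_pi_gaussianReal (k : ι) :
    HasLaw (fun w : ι → ℝ => w k) (gaussianReal 0 (v k))
      (Measure.pi fun k => gaussianReal 0 (v k)) :=
  (measurePreserving_eval (fun k => gaussianReal 0 (v k)) k).hasLaw

lemma memLp_eval_pi_gaussianReal (k : ι) :
    MemLp (fun w : ι → ℝ => w k) 2 (Measure.pi fun k => gaussianReal 0 (v k)) :=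
  (memLp_id_gaussianReal 2).comp_measurePreserving (measurePreserving_eval _ k)

lemma isGaussian_pi_gaussianReal : IsGaussian (Measure.pi fun k => gaussianReal 0 (v k)) := by
  simpa using (iIndepFun.hasGaussianLaw
    (fun k => (hasLaw_eval_pi_gaussianReal v k).hasGaussianLaw)
    (iIndepFun_pi (X := fun _ => id) fun _ => aemeasurable_id)).isGaussian_map

lemma integral_affine_pi_gaussianReal (c : ℝ) (a : ι → ℝ) :
    ∫ w, c + ∑ k, a k * w k ∂(Measure.pi fun k => gaussianReal 0 (v k)) = c := by
  have hint k := ((memLp_eval_pi_gaussianReal v k).integrable one_le_two).const_mul (a k)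
  rw [integral_add (integrable_const c) (integrable_finsetSum _ fun k _ => hint k),
    integral_finsetSum _ fun k _ => hint k]
  simp [integral_const_mul, (hasLaw_eval_pi_gaussianReal v _).integral_eq,
    integral_id_gaussianReal]

lemma covariance_eval_pi_gaussianReal [DecidableEq ι] (k l : ι) :
    cov[fun w : ι → ℝ => w k, fun w => w l; Measure.pi fun k => gaussianReal 0 (v k)] =
      if k = l then (v k : ℝ) else 0 := by
  split_ifs with hkl
  · subst hkl
    rw [covariance_self (measurable_pi_apply k).aemeasurable,
      (hasLaw_eval_pi_gaussianReal v k).variance_eq, variance_id_gaussianReal]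
  · exact ((iIndepFun_pi (X := fun _ => id) fun _ => aemeasurable_id).indepFun hkl
      ).covariance_eq_zero (memLp_eval_pi_gaussianReal v k) (memLp_eval_pi_gaussianReal v l)

lemma covariance_affine_pi_gaussianReal (c d : ℝ) (a b : ι → ℝ) :
    cov[fun w : ι → ℝ => c + ∑ k, a k * w k, fun w => d + ∑ k, b k * w k;
      Measure.pi fun k => gaussianReal 0 (v k)] = ∑ k, a k * b k * v k := by
  classical
  have hL2 (a : ι → ℝ) k := (memLp_eval_pi_gaussianReal v k).const_mul (a k)
  rw [covariance_const_add_left ((memLp_finsetSum _ fun k _ => hL2 a k).integrable one_le_two),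
    covariance_const_add_right ((memLp_finsetSum _ fun k _ => hL2 b k).integrable one_le_two),
    covariance_fun_sum_fun_sum (hL2 a) (hL2 b)]
  simp only [covariance_const_mul_left, covariance_const_mul_right,
    covariance_eval_pi_gaussianReal, mul_ite, mul_zero, sum_ite_eq, mem_univ, if_true]
  exact sum_congr rfl fun k _ => by ring

theorem map_affine_pi_gaussianReal [DecidableEq κ] (c : κ → ℝ) (a : κ → ι → ℝ)
    (s : κ → ℝ≥0)
    (ha : ∀ p q, ∑ k, a p k * a q k * v k = if p = q then (s p : ℝ) else 0) :
    (Measure.pi fun k => gaussianReal 0 (v k)).map (fun w p => c p + ∑ k, a p k * w k) =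
      Measure.pi fun p => gaussianReal (c p) (s p) := by
  set π := Measure.pi fun k => gaussianReal 0 (v k)
  have := isGaussian_pi_gaussianReal v
  let L : (ι → ℝ) →L[ℝ] (κ → ℝ) :=
    ContinuousLinearMap.pi fun p => ∑ k, a p k • ContinuousLinearMap.proj k
  have hY : HasGaussianLaw (fun w p => c p + ∑ k, a p k * w k) π := by
    constructor
    have hmap : π.map (fun w p => c p + ∑ k, a p k * w k) = (π.map L).map (c + ·) := by
      rw [Measure.map_map (by fun_prop) (by fun_prop)]
      congr with w p
      simp [L]
    rw [hmap]
    infer_instance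
  have hindep : iIndepFun (fun p w => c p + ∑ k, a p k * w k) π :=
    hY.iIndepFun_of_covariance_eq_zero fun p q hpq => by
      rw [covariance_affine_pi_gaussianReal, ha, if_neg hpq]
  rw [(iIndepFun_iff_map_fun_eq_pi_map
    fun p => (by fun_prop : Measurable _).aemeasurable).1 hindep]
  congr with p : 1
  have hYp : HasGaussianLaw (fun w => c p + ∑ k, a p k * w k) π := hY.eval p
  rw [hYp.map_eq_gaussianReal, integral_affine_pi_gaussianReal,
    ← covariance_self hYp.aemeasurable, covariance_affine_pi_gaussianReal, ha, if_pos rfl,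
    Real.toNNReal_coe]

end GaussianPi

section CloneIndex

variable {τ σ : Type*} [Fintype τ] [LinearOrder τ] [DecidableEq σ] {Δ : τ → Finset σ}

/-- The paper's `b_i^t`. -/
def visitCount (Δ : τ → Finset σ) (t : τ) (i : σ) : ℕ := #{t' | t' ≤ t ∧ i ∈ Δ t'}

lemma visitCount_pos {t : τ} {i : σ} (h : i ∈ Δ t) : 0 < visitCount Δ t i :=
  card_pos.2 ⟨t, by simp [h]⟩

lemma visitCount_le (t : τ) (i : σ) : visitCount Δ t i ≤ #{t | i ∈ Δ t} :=
  card_le_card fun t' => by simp +contextual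

lemma strictMonoOn_visitCount (i : σ) : StrictMonoOn (visitCount Δ · i) {t | i ∈ Δ t} := by
  intro t _ t' ht' hlt
  refine card_lt_card <| (ssubset_iff_of_subset fun s => ?_).2 ⟨t', ?_, ?_⟩
  · simp only [mem_filter, mem_univ, true_and]
    exact fun ⟨hs, hi⟩ => ⟨hs.trans hlt.le, hi⟩
  · simpa using ht'
  · simp [hlt]

/-- The clone `G_i^{b_i^t}` used at `(t, i)`, indexed from `0`; the `% M` is inert since
`1 ≤ b_i^t ≤ M` under the visit bound. -/
def cloneIndex {M : ℕ} (hM : 0 < M) (p : {q : τ × σ // q.2 ∈ Δ q.1}) : Fin M :=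
  ⟨(visitCount Δ p.1.1 p.1.2 - 1) % M, Nat.mod_lt _ hM⟩

lemma cloneIndex_add_one {M : ℕ} (hM : 0 < M) (hΔ : ∀ i, #{t | i ∈ Δ t} ≤ M)
    (p : {q : τ × σ // q.2 ∈ Δ q.1}) :
    (cloneIndex hM p : ℕ) + 1 = visitCount Δ p.1.1 p.1.2 := by
  have := visitCount_pos p.2
  have := (visitCount_le p.1.1 p.1.2).trans (hΔ p.1.2)
  rw [cloneIndex, Fin.val_mk, Nat.mod_eq_of_lt (by omega)]
  omega

lemma injective_site_cloneIndex {M : ℕ} (hM : 0 < M) (hΔ : ∀ i, #{t | i ∈ Δ t} ≤ M) :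
    Function.Injective fun p : {q : τ × σ // q.2 ∈ Δ q.1} => (p.1.2, cloneIndex hM p) := by
  rintro ⟨⟨t, i⟩, hi⟩ ⟨⟨t', i'⟩, hi'⟩ h
  obtain ⟨rfl, h⟩ := Prod.mk.inj h
  obtain rfl : t = t' := (strictMonoOn_visitCount i).injOn hi hi' <| by
    rw [← cloneIndex_add_one hM hΔ ⟨(t, i), hi⟩, ← cloneIndex_add_one hM hΔ ⟨(t', i), hi'⟩,
      h]
  rfl

end CloneIndex

section CloneCoeff

variable {σ : Type*} [DecidableEq σ] (M : ℕ)

noncomputable def cloneCoeff (i : σ) (j : Fin M) : σ ⊕ (σ × Fin M) → ℝ :=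
  Sum.elim (fun i' => if i' = i then 1 else 0)
    fun q => if q.1 = i then (if q.2 = j then 1 else 0) - 1 / M else 0

def cloneVariance : σ ⊕ (σ × Fin M) → ℝ≥0 := Sum.elim (fun _ => 1) fun _ => M

lemma sum_cloneCoeff_mul [Fintype σ] (i : σ) (j : Fin M) (w : σ ⊕ (σ × Fin M) → ℝ) :
    ∑ k, cloneCoeff M i j k * w k =
      w (.inl i) + w (.inr (i, j)) - 1 / M * ∑ j', w (.inr (i, j')) := by
  simp [cloneCoeff, Fintype.sum_sum_type, Fintype.sum_prod_type, ite_mul, sub_mul,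
    sum_sub_distrib, mul_sum, add_sub_assoc]

variable {M}

lemma sum_cloneCoeff_inr (hM : 0 < M) (i i' : σ) (j : Fin M) :
    ∑ j', cloneCoeff M i j (.inr (i', j')) = 0 := by
  have hM' : (M : ℝ) ≠ 0 := by positivity
  by_cases hi : i' = i <;> simp [cloneCoeff, hi, sum_sub_distrib, hM']

lemma sum_cloneCoeff_mul_cloneCoeff [Fintype σ] (hM : 0 < M) (i i' : σ) (j j' : Fin M) :
    ∑ k, cloneCoeff M i j k * cloneCoeff M i' j' k * cloneVariance M k =
      if (i, j) = (i', j') then (M : ℝ) else 0 := by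
  simp_rw [mul_assoc, sum_cloneCoeff_mul, cloneVariance, Sum.elim_inr, ← sum_mul,
    sum_cloneCoeff_inr hM]
  rcases eq_or_ne i i' with rfl | hi
  · have hM' : (M : ℝ) ≠ 0 := by positivity
    by_cases hj : j' = j <;> simp [cloneCoeff, hj, hM', Ne.symm, sub_mul]
  · simp [cloneCoeff, hi]

end CloneCoeff

theorem stmt_16_general {Ω : Type*} [MeasurableSpace Ω] (P : Measure Ω)
    (N M T : ℕ) (hM : 0 < M)
    (μvec : Fin N → ℝ) (Δ : Fin T → Finset (Fin N))
    (hΔ : ∀ i : Fin N, (Finset.univ.filter (fun t => i ∈ Δ t)).card ≤ M)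
    (Z : Fin N → Ω → ℝ) (G : Fin N → Fin M → Ω → ℝ)
    (hlaw : P.map (fun ω => fun idx : Fin N ⊕ (Fin N × Fin M) =>
        Sum.elim (fun i => Z i ω) (fun p => G p.1 p.2 ω) idx) =
      Measure.pi (fun idx : Fin N ⊕ (Fin N × Fin M) =>
        Sum.elim (fun _ => gaussianReal 0 1) (fun _ => gaussianReal 0 (M : NNReal)) idx)) :
    P.map (fun ω => fun p : {q : Fin T × Fin N // q.2 ∈ Δ q.1} =>
        μvec p.1.2 + Z p.1.2 ω +
          G p.1.2
            ⟨((Finset.univ.filter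
                (fun t' : Fin T => t' ≤ p.1.1 ∧ p.1.2 ∈ Δ t')).card - 1) % M,
              Nat.mod_lt _ hM⟩ ω -
          (1 / (M : ℝ)) * ∑ j : Fin M, G p.1.2 j ω) =
      Measure.pi (fun p : {q : Fin T × Fin N // q.2 ∈ Δ q.1} =>
        gaussianReal (μvec p.1.2) (M : NNReal)) := by
  set W := fun ω => fun idx : Fin N ⊕ (Fin N × Fin M) =>
    Sum.elim (fun i => Z i ω) (fun p => G p.1 p.2 ω) idx
  have hν : Measure.pi (fun idx : Fin N ⊕ (Fin N × Fin M) =>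
        Sum.elim (fun _ => gaussianReal 0 1) (fun _ => gaussianReal 0 (M : NNReal)) idx) =
      Measure.pi fun k => gaussianReal 0 (cloneVariance M k) := by
    congr with (i | q) <;> rfl
  rw [hν] at hlaw
  have hW : AEMeasurable W P := aemeasurable_of_map_neZero (by rw [hlaw]; infer_instance)
  convert_to P.map ((fun w (p : {q : Fin T × Fin N // q.2 ∈ Δ q.1}) =>
      μvec p.1.2 + ∑ k, cloneCoeff M p.1.2 (cloneIndex hM p) k * w k) ∘ W) = _ using 2
  · funext ω p
    simp only [Function.comp_apply, sum_cloneCoeff_mul, W, Sum.elim_inl, Sum.elim_inr,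
      cloneIndex, visitCount]
    ring
  rw [← AEMeasurable.map_map_of_aemeasurable (Measurable.aemeasurable (by fun_prop)) hW, hlaw,
    map_affine_pi_gaussianReal]
  intro p q
  rw [sum_cloneCoeff_mul_cloneCoeff hM, NNReal.coe_natCast]
  exact if_congr (injective_site_cloneIndex hM hΔ).eq_iff rfl rfl

/-- subset Gaussian cloning has an independent Gaussian law.
Given μ ∈ ℝ^N, subsets Δ_1,…,Δ_T of [N] each containing any i at most M times,
i.i.d. Z_i ∼ N(0,1) and G_i^j ∼ N(0,M) all mutually independent (encoded by the
joint law being the product of the marginals), with Ḡ_i = (1/M)Σ_j G_i^j and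
b_i^t = #{t' ≤ t : i ∈ Δ_{t'}}, the family
X_{t,i} = μ_i + Z_i + G_i^{b_i^t} − Ḡ_i (for t ∈ [T] and i ∈ Δ_t)
has joint law the product over pairs (t,i), i ∈ Δ_t, of N(μ_i, M). -/
theorem stmt_16 {Ω : Type*} [MeasurableSpace Ω] (P : Measure Ω) [IsProbabilityMeasure P]
    (N M T : ℕ) (hN : 1 ≤ N) (hM : 0 < M) (hT : 1 ≤ T)
    (μvec : Fin N → ℝ) (Δ : Fin T → Finset (Fin N))
    (hΔ : ∀ i : Fin N, (Finset.univ.filter (fun t => i ∈ Δ t)).card ≤ M)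
    (Z : Fin N → Ω → ℝ) (G : Fin N → Fin M → Ω → ℝ)
    (hlaw : P.map (fun ω => fun idx : Fin N ⊕ (Fin N × Fin M) =>
        Sum.elim (fun i => Z i ω) (fun p => G p.1 p.2 ω) idx) =
      Measure.pi (fun idx : Fin N ⊕ (Fin N × Fin M) =>
        Sum.elim (fun _ => gaussianReal 0 1) (fun _ => gaussianReal 0 (M : NNReal)) idx)) :
    P.map (fun ω => fun p : {q : Fin T × Fin N // q.2 ∈ Δ q.1} =>
        μvec p.1.2 + Z p.1.2 ω +
          G p.1.2
            ⟨((Finset.univ.filter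
                (fun t' : Fin T => t' ≤ p.1.1 ∧ p.1.2 ∈ Δ t')).card - 1) % M,
              Nat.mod_lt _ hM⟩ ω -
          (1 / (M : ℝ)) * ∑ j : Fin M, G p.1.2 j ω) =
      Measure.pi (fun p : {q : Fin T × Fin N // q.2 ∈ Δ q.1} =>
        gaussianReal (μvec p.1.2) (M : NNReal)) :=
  stmt_16_general P N M T hM μvec Δ hΔ Z G hlaw
end
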